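/- arXiv:2410.01558 — 6 statements merged into one kernel-verified Lean document; each statement's English description precedes it below -/
import Mathlib

section
/- Let x be a natural number and let u, A : ℕ → [0,1] → [0,∞) and c : ℕ → [0,1] → [0,∞) be families of functions, each continuous in the real variable, and let b : ℕ → [0,∞). Suppose that for all integers k ≥ x and all τ ∈ (0,1] one has u(k,τ) ≤ A(k,τ) + b(k)·∫_τ^1 ( Σ_{l=x}^{k-1} c(l,τ')·u(l,τ') ) dτ'. Then for all integers k ≥ x and all τ ∈ (0,1] one has u(k,τ) ≤ A(k,τ) + b(k)·∫_τ^1 ( Σ_{l=x}^{k-1} c(l,τ')·A(l,τ')·∏_{j=l+1}^{k-1} ( 1 + ∫_τ^{τ'} b(j)·c(j,τ'') dτ'' ) ) dτ'. -/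
open MeasureTheory

section Aux

private lemma hybrid_gronwall_aux
    (x : ℕ) (U A C : ℕ → ℝ → ℝ) (b : ℕ → ℝ)
    (hU_cont : ∀ k, Continuous (U k))
    (hA_cont : ∀ k, Continuous (A k))
    (hC_cont : ∀ k, Continuous (C k))
    (hA0 : ∀ k t, 0 ≤ A k t) (hC0 : ∀ k t, 0 ≤ C k t)
    (hb0 : ∀ k, 0 ≤ b k)
    (h : ∀ k, x ≤ k → ∀ τ ∈ Set.Ioc (0:ℝ) 1,
      U k τ ≤ A k τ + b k * ∫ s in τ..1, ∑ l ∈ Finset.Ico x k, C l s * U l s) :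
    ∀ k, x ≤ k → ∀ τ ∈ Set.Ioc (0:ℝ) 1,
      (∫ s in τ..1, ∑ l ∈ Finset.Ico x k, C l s * U l s) ≤
      ∫ s in τ..1, ∑ l ∈ Finset.Ico x k, C l s * A l s *
        ∏ j ∈ Finset.Ico (l+1) k, (1 + ∫ t in τ..s, b j * C j t) := by
  -- basic continuity facts
  have hprim : ∀ (j : ℕ) (a : ℝ), Continuous (fun s => ∫ t in a..s, b j * C j t) := by
    intro j a
    exact intervalIntegral.continuous_primitive
      (fun a' b' => (continuous_const.mul (hC_cont j)).intervalIntegrable a' b') a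
  have hprod : ∀ (F : Finset ℕ) (a : ℝ),
      Continuous (fun s => ∏ j ∈ F, (1 + ∫ t in a..s, b j * C j t)) := by
    intro F a
    exact continuous_finset_prod F (fun j _ => continuous_const.add (hprim j a))
  have hgcont : ∀ (m : ℕ) (a : ℝ), Continuous (fun s => ∑ l ∈ Finset.Ico x m,
      C l s * A l s * ∏ j ∈ Finset.Ico (l+1) m, (1 + ∫ t in a..s, b j * C j t)) := by
    intro m a
    exact continuous_finset_sum _
      (fun l _ => ((hC_cont l).mul (hA_cont l)).mul (hprod _ a))
  have hCUcont : ∀ (m : ℕ), Continuous (fun s => ∑ l ∈ Finset.Ico x m, C l s * U l s) := by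
    intro m
    exact continuous_finset_sum _ (fun l _ => (hC_cont l).mul (hU_cont l))
  -- nonnegativity of primitives
  have hprim0 : ∀ (j : ℕ) (a s : ℝ), a ≤ s → 0 ≤ ∫ t in a..s, b j * C j t := by
    intro j a s has
    exact intervalIntegral.integral_nonneg has (fun t _ => mul_nonneg (hb0 j) (hC0 j t))
  -- monotonicity of products in the lower integration limit
  have hmono : ∀ (F : Finset ℕ) (a a' s : ℝ), a ≤ a' → a' ≤ s →
      (∏ j ∈ F, (1 + ∫ t in a'..s, b j * C j t)) ≤
      ∏ j ∈ F, (1 + ∫ t in a..s, b j * C j t) := by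
    intro F a a' s h1 h2
    apply Finset.prod_le_prod
    · intro j _
      have := hprim0 j a' s h2
      linarith
    · intro j _
      have hadd : (∫ t in a..a', b j * C j t) + ∫ t in a'..s, b j * C j t
          = ∫ t in a..s, b j * C j t :=
        intervalIntegral.integral_add_adjacent_intervals
          ((continuous_const.mul (hC_cont j)).intervalIntegrable a a')
          ((continuous_const.mul (hC_cont j)).intervalIntegrable a' s)
      have := hprim0 j a a' h1
      linarith
  intro k hk
  induction k, hk using Nat.le_induction with
  | base => intro τ hτ; simp
  | succ k hk IH =>
    intro τ hτ
    obtain ⟨hτ0, hτ1⟩ := hτ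
    set g : ℝ → ℝ := fun s => ∑ l ∈ Finset.Ico x k,
      C l s * A l s * ∏ j ∈ Finset.Ico (l+1) k, (1 + ∫ t in τ..s, b j * C j t) with hg_def
    set H : ℝ → ℝ := fun s => ∫ t in τ..s, b k * C k t with hH_def
    set G : ℝ → ℝ := fun s => ∫ σ in s..1, g σ with hG_def
    have hgc : Continuous g := hgcont k τ
    have hHc : Continuous H := hprim k τ
    have hGc : Continuous G := by
      have h1 : Continuous fun s => ∫ σ in (1:ℝ)..s, g σ :=
        intervalIntegral.continuous_primitive (fun a' b' => hgc.intervalIntegrable a' b') 1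
      have : G = fun s => -∫ σ in (1:ℝ)..s, g σ := by
        funext s
        exact intervalIntegral.integral_symm 1 s
      rw [this]
      exact h1.neg
    have hfk : Continuous (fun s => b k * C k s) := continuous_const.mul (hC_cont k)
    -- Step A : split the sum
    have hsplit : (∫ s in τ..1, ∑ l ∈ Finset.Ico x (k+1), C l s * U l s)
        = (∫ s in τ..1, ∑ l ∈ Finset.Ico x k, C l s * U l s)
          + ∫ s in τ..1, C k s * U k s := by
      rw [← intervalIntegral.integral_add ((hCUcont k).intervalIntegrable τ 1)
        ((by have := (hC_cont k).mul (hU_cont k); exact this :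
          Continuous (fun s => C k s * U k s)).intervalIntegrable τ 1)]
      apply intervalIntegral.integral_congr
      intro s _
      exact Finset.sum_Ico_succ_top hk _
    -- Step C : pointwise bound for the top term
    have hstep : ∀ s ∈ Set.Icc τ (1:ℝ), C k s * U k s ≤ C k s * A k s + b k * C k s * G s := by
      intro s hs
      have hs' : s ∈ Set.Ioc (0:ℝ) 1 := ⟨lt_of_lt_of_le hτ0 hs.1, hs.2⟩
      have h1 := h k hk s hs'
      have h2 := IH s hs'
      have h3 : (∫ σ in s..1, ∑ l ∈ Finset.Ico x k,
          C l σ * A l σ * ∏ j ∈ Finset.Ico (l+1) k, (1 + ∫ t in s..σ, b j * C j t)) ≤ G s := by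
        apply intervalIntegral.integral_mono_on hs.2
          ((hgcont k s).intervalIntegrable s 1) (hgc.intervalIntegrable s 1)
        intro σ hσ
        apply Finset.sum_le_sum
        intro l _
        exact mul_le_mul_of_nonneg_left (hmono _ τ s σ hs.1 hσ.1)
          (mul_nonneg (hC0 l σ) (hA0 l σ))
      have hU : U k s ≤ A k s + b k * G s := by
        refine h1.trans ?_
        have := mul_le_mul_of_nonneg_left (h2.trans h3) (hb0 k)
        linarith
      calc C k s * U k s ≤ C k s * (A k s + b k * G s) :=
            mul_le_mul_of_nonneg_left hU (hC0 k s)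
        _ = C k s * A k s + b k * C k s * G s := by ring
    have hGint : IntervalIntegrable (fun s => C k s * A k s + b k * C k s * G s) volume τ 1 :=
      (((hC_cont k).mul (hA_cont k)).add ((hfk.mul hGc))).intervalIntegrable τ 1
    have hCk : (∫ s in τ..1, C k s * U k s)
        ≤ ∫ s in τ..1, (C k s * A k s + b k * C k s * G s) :=
      intervalIntegral.integral_mono_on hτ1
        (((hC_cont k).mul (hU_cont k)).intervalIntegrable τ 1) hGint hstep
    -- Step D : integration by parts
    have hibp : (∫ s in τ..1, (b k * C k s) * G s) = ∫ s in τ..1, H s * g s := by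
      have hu : ∀ s ∈ Set.uIcc τ (1:ℝ), HasDerivAt H (b k * C k s) s := by
        intro s _
        exact intervalIntegral.integral_hasDerivAt_right (hfk.intervalIntegrable τ s)
          (hfk.stronglyMeasurableAtFilter volume (nhds s)) hfk.continuousAt
      have hv : ∀ s ∈ Set.uIcc τ (1:ℝ), HasDerivAt G (-(g s)) s := by
        intro s _
        exact intervalIntegral.integral_hasDerivAt_left (hgc.intervalIntegrable s 1)
          (hgc.stronglyMeasurableAtFilter volume (nhds s)) hgc.continuousAt
      have key := intervalIntegral.integral_mul_deriv_eq_deriv_mul hu hv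
        (hfk.intervalIntegrable τ 1) (hgc.neg.intervalIntegrable τ 1)
      have hH0 : H τ = 0 := intervalIntegral.integral_same
      have hG0 : G 1 = 0 := intervalIntegral.integral_same
      rw [hH0, hG0] at key
      simp only [mul_zero, zero_mul, zero_sub] at key
      have l1 : (∫ s in τ..1, H s * -(g s)) = -∫ s in τ..1, H s * g s := by
        rw [← intervalIntegral.integral_neg]
        congr 1
        funext s
        ring
      rw [l1] at key
      linarith
    -- Step E : combine everything
    have hsum : (∫ s in τ..1, C k s * A k s + b k * C k s * G s)
        = (∫ s in τ..1, C k s * A k s) + ∫ s in τ..1, (b k * C k s) * G s := by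
      rw [← intervalIntegral.integral_add ((by have := (hC_cont k).mul (hA_cont k); exact this :
          Continuous (fun s => C k s * A k s)).intervalIntegrable τ 1)
        ((by have := hfk.mul hGc; exact this :
          Continuous (fun s => b k * C k s * G s)).intervalIntegrable τ 1)]
    have hfinal : (∫ s in τ..1, g s) + ((∫ s in τ..1, C k s * A k s)
        + ∫ s in τ..1, H s * g s)
        = ∫ s in τ..1, ∑ l ∈ Finset.Ico x (k+1), C l s * A l s *
          ∏ j ∈ Finset.Ico (l+1) (k+1), (1 + ∫ t in τ..s, b j * C j t) := by
      rw [← intervalIntegral.integral_add ((by have := (hC_cont k).mul (hA_cont k); exact this :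
          Continuous (fun s => C k s * A k s)).intervalIntegrable τ 1)
        ((by have := hHc.mul hgc; exact this :
          Continuous (fun s => H s * g s)).intervalIntegrable τ 1)]
      rw [← intervalIntegral.integral_add (hgc.intervalIntegrable τ 1)
        ((by have := ((hC_cont k).mul (hA_cont k)).add (hHc.mul hgc); exact this :
          Continuous (fun s => C k s * A k s + H s * g s)).intervalIntegrable τ 1)]
      apply intervalIntegral.integral_congr
      intro s _
      have e1 : ∑ l ∈ Finset.Ico x (k+1), C l s * A l s *
          ∏ j ∈ Finset.Ico (l+1) (k+1), (1 + ∫ t in τ..s, b j * C j t)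
          = (∑ l ∈ Finset.Ico x k, (C l s * A l s *
              ∏ j ∈ Finset.Ico (l+1) k, (1 + ∫ t in τ..s, b j * C j t)) * (1 + H s))
            + C k s * A k s := by
        rw [Finset.sum_Ico_succ_top hk]
        congr 1
        · apply Finset.sum_congr rfl
          intro l hl
          rw [Finset.prod_Ico_succ_top (Nat.succ_le_of_lt (Finset.mem_Ico.mp hl).2)]
          ring
        · simp
      beta_reduce
      rw [e1, ← Finset.sum_mul]
      simp only [hg_def]
      ring
    calc (∫ s in τ..1, ∑ l ∈ Finset.Ico x (k+1), C l s * U l s)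
        = (∫ s in τ..1, ∑ l ∈ Finset.Ico x k, C l s * U l s)
          + ∫ s in τ..1, C k s * U k s := hsplit
      _ ≤ (∫ s in τ..1, g s) + ∫ s in τ..1, (C k s * A k s + b k * C k s * G s) :=
          add_le_add (IH τ ⟨hτ0, hτ1⟩) hCk
      _ = (∫ s in τ..1, g s) + ((∫ s in τ..1, C k s * A k s)
          + ∫ s in τ..1, H s * g s) := by rw [hsum, hibp]
      _ = _ := hfinal

end Aux

/-- Hybrid continuous–discrete Gronwall-type inequality: if
`u(k,τ) ≤ A(k,τ) + b(k)·∫_τ^1 Σ_{l=x}^{k-1} c(l,τ')·u(l,τ') dτ'` for all `k ≥ x` and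
`τ ∈ (0,1]`, then
`u(k,τ) ≤ A(k,τ) + b(k)·∫_τ^1 Σ_{l=x}^{k-1} c(l,τ')·A(l,τ')·∏_{j=l+1}^{k-1}
  (1 + ∫_τ^{τ'} b(j)·c(j,τ'') dτ'') dτ'`. -/
theorem hybrid_gronwall
    (x : ℕ) (u A c : ℕ → ℝ → ℝ) (b : ℕ → ℝ)
    (hu_nonneg : ∀ k, ∀ τ ∈ Set.Icc (0:ℝ) 1, 0 ≤ u k τ)
    (hA_nonneg : ∀ k, ∀ τ ∈ Set.Icc (0:ℝ) 1, 0 ≤ A k τ)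
    (hc_nonneg : ∀ k, ∀ τ ∈ Set.Icc (0:ℝ) 1, 0 ≤ c k τ)
    (hb_nonneg : ∀ k, 0 ≤ b k)
    (hu_cont : ∀ k, ContinuousOn (u k) (Set.Icc (0:ℝ) 1))
    (hA_cont : ∀ k, ContinuousOn (A k) (Set.Icc (0:ℝ) 1))
    (hc_cont : ∀ k, ContinuousOn (c k) (Set.Icc (0:ℝ) 1))
    (h : ∀ k, x ≤ k → ∀ τ ∈ Set.Ioc (0:ℝ) 1,
      u k τ ≤ A k τ + b k * ∫ τ' in τ..1, ∑ l ∈ Finset.Ico x k, c l τ' * u l τ') :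
    ∀ k, x ≤ k → ∀ τ ∈ Set.Ioc (0:ℝ) 1,
      u k τ ≤ A k τ + b k * ∫ τ' in τ..1, ∑ l ∈ Finset.Ico x k,
        c l τ' * A l τ' *
          ∏ j ∈ Finset.Ico (l + 1) k, (1 + ∫ τ'' in τ..τ', b j * c j τ'') := by
  -- clamp to [0,1]
  set cl : ℝ → ℝ := fun t => max 0 (min 1 t) with hcl_def
  have hcl_mem : ∀ t, cl t ∈ Set.Icc (0:ℝ) 1 :=
    fun t => ⟨le_max_left _ _, max_le zero_le_one (min_le_left _ _)⟩
  have hcl_eq : ∀ t ∈ Set.Icc (0:ℝ) 1, cl t = t := by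
    intro t ht
    simp only [hcl_def]
    rw [min_eq_right ht.2, max_eq_right ht.1]
  have hcl_cont : Continuous cl := continuous_const.max (continuous_const.min continuous_id)
  set U : ℕ → ℝ → ℝ := fun k t => u k (cl t) with hU_def
  set A' : ℕ → ℝ → ℝ := fun k t => A k (cl t) with hA'_def
  set C' : ℕ → ℝ → ℝ := fun k t => c k (cl t) with hC'_def
  have hUc : ∀ k, Continuous (U k) :=
    fun k => (hu_cont k).comp_continuous hcl_cont hcl_mem
  have hAc : ∀ k, Continuous (A' k) :=
    fun k => (hA_cont k).comp_continuous hcl_cont hcl_mem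
  have hCc : ∀ k, Continuous (C' k) :=
    fun k => (hc_cont k).comp_continuous hcl_cont hcl_mem
  have hA0 : ∀ k t, 0 ≤ A' k t := fun k t => hA_nonneg k _ (hcl_mem t)
  have hC0 : ∀ k t, 0 ≤ C' k t := fun k t => hc_nonneg k _ (hcl_mem t)
  -- agreement on [0,1]
  have hUeq : ∀ k, ∀ t ∈ Set.Icc (0:ℝ) 1, U k t = u k t := by
    intro k t ht; simp only [hU_def]; rw [hcl_eq t ht]
  have hAeq : ∀ k, ∀ t ∈ Set.Icc (0:ℝ) 1, A' k t = A k t := by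
    intro k t ht; simp only [hA'_def]; rw [hcl_eq t ht]
  have hCeq : ∀ k, ∀ t ∈ Set.Icc (0:ℝ) 1, C' k t = c k t := by
    intro k t ht; simp only [hC'_def]; rw [hcl_eq t ht]
  -- transfer hypothesis
  have h' : ∀ k, x ≤ k → ∀ τ ∈ Set.Ioc (0:ℝ) 1,
      U k τ ≤ A' k τ + b k * ∫ s in τ..1, ∑ l ∈ Finset.Ico x k, C' l s * U l s := by
    intro k hk τ hτ
    have hτIcc : τ ∈ Set.Icc (0:ℝ) 1 := ⟨hτ.1.le, hτ.2⟩
    rw [hUeq k τ hτIcc, hAeq k τ hτIcc]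
    have hint : (∫ s in τ..1, ∑ l ∈ Finset.Ico x k, C' l s * U l s)
        = ∫ s in τ..1, ∑ l ∈ Finset.Ico x k, c l s * u l s := by
      apply intervalIntegral.integral_congr
      intro s hs
      rw [Set.uIcc_of_le hτ.2] at hs
      have hsIcc : s ∈ Set.Icc (0:ℝ) 1 := ⟨le_trans hτ.1.le hs.1, hs.2⟩
      exact Finset.sum_congr rfl fun l _ => by rw [hCeq l s hsIcc, hUeq l s hsIcc]
    rw [hint]
    exact h k hk τ hτ
  intro k hk τ hτ
  have key := hybrid_gronwall_aux x U A' C' b hUc hAc hCc hA0 hC0 hb_nonneg h' k hk τ hτ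
  have hτIcc : τ ∈ Set.Icc (0:ℝ) 1 := ⟨hτ.1.le, hτ.2⟩
  have e1 : (∫ s in τ..1, ∑ l ∈ Finset.Ico x k, c l s * u l s)
      = ∫ s in τ..1, ∑ l ∈ Finset.Ico x k, C' l s * U l s := by
    apply intervalIntegral.integral_congr
    intro s hs
    rw [Set.uIcc_of_le hτ.2] at hs
    have hsIcc : s ∈ Set.Icc (0:ℝ) 1 := ⟨le_trans hτ.1.le hs.1, hs.2⟩
    exact Finset.sum_congr rfl fun l _ =>
      by rw [hCeq l s hsIcc, hUeq l s hsIcc]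
  have e2 : (∫ s in τ..1, ∑ l ∈ Finset.Ico x k, C' l s * A' l s *
        ∏ j ∈ Finset.Ico (l+1) k, (1 + ∫ t in τ..s, b j * C' j t))
      = ∫ s in τ..1, ∑ l ∈ Finset.Ico x k, c l s * A l s *
        ∏ j ∈ Finset.Ico (l+1) k, (1 + ∫ t in τ..s, b j * c j t) := by
    apply intervalIntegral.integral_congr
    intro s hs
    rw [Set.uIcc_of_le hτ.2] at hs
    have hsIcc : s ∈ Set.Icc (0:ℝ) 1 := ⟨le_trans hτ.1.le hs.1, hs.2⟩
    refine Finset.sum_congr rfl fun l _ => ?_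
    rw [hCeq l s hsIcc, hAeq l s hsIcc]
    congr 1
    refine Finset.prod_congr rfl fun j _ => ?_
    congr 1
    apply intervalIntegral.integral_congr
    intro t ht
    rw [Set.uIcc_of_le hs.1] at ht
    have htIcc : t ∈ Set.Icc (0:ℝ) 1 :=
      ⟨le_trans hτ.1.le ht.1, le_trans ht.2 hs.2⟩
    beta_reduce
    rw [hCeq j t htIcc]
  have hmain := h k hk τ hτ
  rw [e1] at hmain
  refine hmain.trans ?_
  have := mul_le_mul_of_nonneg_left key (hb_nonneg k)
  rw [e2] at this
  linarith
end

section
/- There is an absolute constant C > 0 with the following property. Let x be a natural number, let X ≥ 2 be a real number, and let u, A : ℕ → [0,1] → [0,∞) be families of functions, each continuous in the real variable. Suppose that for all integers k ≥ x and all τ ∈ (0,1] one has u(k,τ) ≤ A(k,τ) + (1/10)·2^{-8k}·∫_τ^1 ( Σ_{l=x}^{k-1} 2^{6l}·(τ')^{-3}·𝟙{τ' ≥ X·2^{-l-1}}·u(l,τ') ) dτ'. Then for all integers k ≥ x and all τ with X·2^{-k-1} ≤ τ ≤ 1, one has u(k,τ) ≤ C·( A(k,τ) + 2^{-7k}·∫_τ^1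 ( Σ_{l=x}^{k-1} 2^{5l}·(τ')^{-3}·𝟙{τ' ≥ X·2^{-l-1}}·A(l,τ') ) dτ' ). -/
open MeasureTheory Set

lemma gr_term_integrable {c τ : ℝ} (hτ : 0 < τ) (hτ1 : τ ≤ 1) (w : ℝ → ℝ)
    (hw : ContinuousOn w (Set.Icc 0 1)) (B : ℝ) :
    IntervalIntegrable
      (fun τ' => B * (τ' ^ 3)⁻¹ * (if c ≤ τ' then (1:ℝ) else 0) * w τ') volume τ 1 := by
  have heq : (fun τ' => B * (τ' ^ 3)⁻¹ * (if c ≤ τ' then (1:ℝ) else 0) * w τ')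
      = Set.indicator (Set.Ici c) (fun τ' => B * (τ' ^ 3)⁻¹ * w τ') := by
    funext τ'
    by_cases h : c ≤ τ' <;> simp [Set.indicator_apply, Set.mem_Ici, h]
  have hg : IntegrableOn (fun τ' => B * (τ' ^ 3)⁻¹ * w τ') (Set.Icc τ 1) := by
    apply ContinuousOn.integrableOn_Icc
    apply ContinuousOn.mul
    · apply ContinuousOn.mul continuousOn_const
      exact ContinuousOn.inv₀ ((continuous_pow 3).continuousOn)
        (fun x hx => pow_ne_zero 3 (ne_of_gt (lt_of_lt_of_le hτ hx.1)))
    · exact hw.mono (Set.Icc_subset_Icc hτ.le le_rfl)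
  rw [heq]
  apply IntegrableOn.intervalIntegrable
  rw [Set.uIcc_of_le hτ1]
  exact hg.indicator measurableSet_Ici

lemma gr_ind_integral_le {c τ : ℝ} (hc : 0 < c) (hτ : 0 < τ) (hτ1 : τ ≤ 1) :
    (∫ τ' in τ..1, (τ' ^ 3)⁻¹ * (if c ≤ τ' then (1:ℝ) else 0)) ≤ c⁻¹ * c⁻¹ := by
  have heq : (fun τ' : ℝ => (τ' ^ 3)⁻¹ * (if c ≤ τ' then (1:ℝ) else 0))
      = Set.indicator (Set.Ici c) (fun τ' => (τ' ^ 3)⁻¹) := by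
    funext τ'
    by_cases h : c ≤ τ' <;> simp [Set.indicator_apply, Set.mem_Ici, h]
  rw [intervalIntegral.integral_of_le hτ1, heq,
    MeasureTheory.setIntegral_indicator measurableSet_Ici]
  by_cases h1 : c ≤ 1
  · have hIcc : IntegrableOn (fun τ' : ℝ => (τ' ^ 3)⁻¹) (Set.Ioc c 1) := by
      apply IntegrableOn.mono_set (t := Set.Icc c 1) _ Set.Ioc_subset_Icc_self
      apply ContinuousOn.integrableOn_Icc
      exact ContinuousOn.inv₀ ((continuous_pow 3).continuousOn)
        (fun x hx => pow_ne_zero 3 (ne_of_gt (lt_of_lt_of_le hc hx.1)))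
    have hsub : volume ((Set.Ioc τ 1 ∩ Set.Ici c) \ Set.Ioc c 1) = 0 := by
      refine measure_mono_null (t := {c}) (fun y hy => ?_) Real.volume_singleton
      simp only [Set.mem_diff, Set.mem_inter_iff, Set.mem_Ioc, Set.mem_Ici,
        not_and, Set.mem_singleton_iff] at hy ⊢
      rcases hy with ⟨⟨⟨_, hy2⟩, hy3⟩, hy4⟩
      by_contra hne
      exact hy4 (lt_of_le_of_ne hy3 (Ne.symm hne)) hy2
    have hle : (∫ τ' in Set.Ioc τ 1 ∩ Set.Ici c, (τ' ^ 3)⁻¹)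
        ≤ ∫ τ' in Set.Ioc c 1, (τ' ^ 3)⁻¹ := by
      apply MeasureTheory.setIntegral_mono_set hIcc
      · filter_upwards [MeasureTheory.ae_restrict_mem measurableSet_Ioc] with y hy
        have hy0 : 0 < y := hc.trans hy.1
        positivity
      · rw [MeasureTheory.ae_le_set]
        exact hsub
    refine hle.trans ?_
    rw [← intervalIntegral.integral_of_le h1]
    have hz : (∫ τ' in c..1, (τ' ^ 3)⁻¹) = ∫ τ' in c..1, τ' ^ (-3 : ℤ) := by
      apply intervalIntegral.integral_congr
      intro y _
      show (y ^ 3)⁻¹ = y ^ (-3 : ℤ)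
      rw [zpow_neg]
      norm_cast
    rw [hz, integral_zpow (Or.inr ⟨by norm_num, by
      rw [Set.uIcc_of_le h1]; intro h0; exact absurd hc (not_lt.2 h0.1)⟩)]
    have h2 : c ^ (-3 + 1 : ℤ) = (c ^ 2)⁻¹ := by
      rw [show (-3 + 1 : ℤ) = -2 by norm_num, zpow_neg,
        show ((2:ℤ)) = ((2:ℕ):ℤ) from rfl, zpow_natCast]
    rw [h2]
    have hc2 : (0:ℝ) < (c ^ 2)⁻¹ := by positivity
    rw [show (c:ℝ)⁻¹ * c⁻¹ = (c ^ 2)⁻¹ by rw [sq, mul_inv], one_zpow]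
    push_cast
    rw [show (-3 + 1 : ℝ) = -2 by norm_num]
    linarith
  · have hempty : Set.Ioc τ 1 ∩ Set.Ici c = ∅ := by
      ext y
      simp only [Set.mem_inter_iff, Set.mem_Ioc, Set.mem_Ici, Set.mem_empty_iff_false,
        iff_false, not_and, and_imp]
      intro _ hy2 hy3
      linarith
    rw [hempty]
    simp only [MeasureTheory.setIntegral_empty]
    positivity

lemma gr_key (x : ℕ) (X : ℝ) (hX : 2 ≤ X) (u A : ℕ → ℝ → ℝ)
    (hA0 : ∀ k, ∀ τ ∈ Set.Icc (0:ℝ) 1, 0 ≤ A k τ)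
    (huc : ∀ k, ContinuousOn (u k) (Set.Icc (0:ℝ) 1))
    (hAc : ∀ k, ContinuousOn (A k) (Set.Icc (0:ℝ) 1))
    (hmain : ∀ k, x ≤ k → ∀ τ ∈ Set.Ioc (0:ℝ) 1,
      u k τ ≤ A k τ + (1 / 10) * (2:ℝ) ^ (-(8 * (k:ℤ))) *
        ∫ τ' in τ..1, ∑ l ∈ Finset.Ico x k,
          (2:ℝ) ^ (6 * l) * (τ' ^ 3)⁻¹ *
            (if X * (2:ℝ) ^ (-(l:ℤ) - 1) ≤ τ' then 1 else 0) * u l τ') :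
    ∀ k, x ≤ k → ∀ τ : ℝ, X * (2:ℝ) ^ (-(k:ℤ) - 1) ≤ τ → τ ≤ 1 →
      u k τ ≤ A k τ + (2:ℝ) ^ (-(7 * (k:ℤ))) *
        ∫ τ' in τ..1, ∑ l ∈ Finset.Ico x k,
          (2:ℝ) ^ (5 * l) * (τ' ^ 3)⁻¹ *
            (if X * (2:ℝ) ^ (-(l:ℤ) - 1) ≤ τ' then 1 else 0) * A l τ' := by
  have hX0 : (0:ℝ) < X := lt_of_lt_of_le two_pos hX
  -- positivity of cutoffs
  have hclpos : ∀ l : ℕ, (0:ℝ) < X * (2:ℝ) ^ (-(l:ℤ) - 1) := by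
    intro l; positivity
  have hclinv : ∀ l : ℕ, (X * (2:ℝ) ^ (-(l:ℤ) - 1))⁻¹ ≤ (2:ℝ) ^ l := by
    intro l
    have h1 : (2:ℝ) ^ (-(l:ℤ)) ≤ X * (2:ℝ) ^ (-(l:ℤ) - 1) := by
      have h2 : (2:ℝ) * (2:ℝ) ^ (-(l:ℤ) - 1) = (2:ℝ) ^ (-(l:ℤ)) := by
        rw [show (2:ℝ) * (2:ℝ) ^ (-(l:ℤ) - 1) = (2:ℝ) ^ (1:ℤ) * (2:ℝ) ^ (-(l:ℤ) - 1) by norm_num,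
          ← zpow_add₀ (two_ne_zero)]
        congr 1; ring
      calc (2:ℝ) ^ (-(l:ℤ)) = 2 * (2:ℝ) ^ (-(l:ℤ) - 1) := h2.symm
        _ ≤ X * (2:ℝ) ^ (-(l:ℤ) - 1) :=
            mul_le_mul_of_nonneg_right hX (by positivity)
    have h3 : (X * (2:ℝ) ^ (-(l:ℤ) - 1))⁻¹ ≤ ((2:ℝ) ^ (-(l:ℤ)))⁻¹ :=
      inv_anti₀ (by positivity) h1
    calc (X * (2:ℝ) ^ (-(l:ℤ) - 1))⁻¹ ≤ ((2:ℝ) ^ (-(l:ℤ)))⁻¹ := h3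
      _ = (2:ℝ) ^ (l:ℤ) := by rw [zpow_neg, inv_inv]
      _ = (2:ℝ) ^ l := by rw [zpow_natCast]
  -- integrability of the A-sums
  have hgInt : ∀ (m : ℕ) (τ'' : ℝ), 0 < τ'' → τ'' ≤ 1 →
      IntervalIntegrable (fun τ' => ∑ l ∈ Finset.Ico x m,
        (2:ℝ) ^ (5 * l) * (τ' ^ 3)⁻¹ *
          (if X * (2:ℝ) ^ (-(l:ℤ) - 1) ≤ τ' then 1 else 0) * A l τ') volume τ'' 1 := by
    intro m τ'' hτ''0 hτ''1
    have := IntervalIntegrable.sum (μ := volume) (a := τ'') (b := 1) (Finset.Ico x m)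
      (f := fun l => fun τ' => (2:ℝ) ^ (5 * l) * (τ' ^ 3)⁻¹ *
        (if X * (2:ℝ) ^ (-(l:ℤ) - 1) ≤ τ' then 1 else 0) * A l τ')
      (fun l _ => gr_term_integrable hτ''0 hτ''1 (A l) (hAc l) _)
    simpa [Finset.sum_fn] using this
  intro k
  induction k using Nat.strong_induction_on with
  | _ k IH =>
  intro hxk τ hcτ hτ1
  have hτ0 : 0 < τ := lt_of_lt_of_le (hclpos k) hcτ
  -- nonnegativity of the A-sum integrand
  have hg0 : ∀ (m : ℕ), ∀ τ' ∈ Set.Icc (0:ℝ) 1, 0 ≤ ∑ l ∈ Finset.Ico x m,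
      (2:ℝ) ^ (5 * l) * (τ' ^ 3)⁻¹ *
        (if X * (2:ℝ) ^ (-(l:ℤ) - 1) ≤ τ' then 1 else 0) * A l τ' := by
    intro m τ' hτ'
    apply Finset.sum_nonneg
    intro l _
    have h1 : (0:ℝ) ≤ (τ' ^ 3)⁻¹ := by
      have := hτ'.1; positivity
    have h2 : (0:ℝ) ≤ (if X * (2:ℝ) ^ (-(l:ℤ) - 1) ≤ τ' then (1:ℝ) else 0) := by
      split <;> norm_num
    have h3 := hA0 l τ' hτ'
    positivity
  obtain ⟨Jk, hJkdef⟩ : ∃ J : ℝ, J = ∫ τ' in τ..1, ∑ l ∈ Finset.Ico x k,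
      (2:ℝ) ^ (5 * l) * (τ' ^ 3)⁻¹ *
        (if X * (2:ℝ) ^ (-(l:ℤ) - 1) ≤ τ' then 1 else 0) * A l τ' := ⟨_, rfl⟩
  rw [← hJkdef]
  have hJk0 : 0 ≤ Jk := by
    rw [hJkdef]
    apply intervalIntegral.integral_nonneg hτ1
    intro y hy
    exact hg0 k y ⟨le_trans hτ0.le hy.1, hy.2⟩
  -- J_l(τ'') ≤ Jk for x ≤ l ≤ k and τ ≤ τ'' ≤ 1
  have hJl : ∀ l, l ≤ k → ∀ τ'' ∈ Set.Icc τ 1,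
      (∫ τ' in τ''..1, ∑ m ∈ Finset.Ico x l,
        (2:ℝ) ^ (5 * m) * (τ' ^ 3)⁻¹ *
          (if X * (2:ℝ) ^ (-(m:ℤ) - 1) ≤ τ' then 1 else 0) * A m τ') ≤ Jk := by
    intro l hlk τ'' hτ''
    have hτ''0 : 0 < τ'' := lt_of_lt_of_le hτ0 hτ''.1
    have step1 : (∫ τ' in τ''..1, ∑ m ∈ Finset.Ico x l,
        (2:ℝ) ^ (5 * m) * (τ' ^ 3)⁻¹ *
          (if X * (2:ℝ) ^ (-(m:ℤ) - 1) ≤ τ' then 1 else 0) * A m τ')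
        ≤ ∫ τ' in τ''..1, ∑ m ∈ Finset.Ico x k,
        (2:ℝ) ^ (5 * m) * (τ' ^ 3)⁻¹ *
          (if X * (2:ℝ) ^ (-(m:ℤ) - 1) ≤ τ' then 1 else 0) * A m τ' := by
      apply intervalIntegral.integral_mono_on hτ''.2
        (hgInt l τ'' hτ''0 hτ''.2) (hgInt k τ'' hτ''0 hτ''.2)
      intro y hy
      apply Finset.sum_le_sum_of_subset_of_nonneg
        (Finset.Ico_subset_Ico le_rfl hlk)
      intro m hm _
      have hy' : y ∈ Set.Icc (0:ℝ) 1 := ⟨le_trans hτ''0.le hy.1, hy.2⟩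
      have h1 : (0:ℝ) ≤ (y ^ 3)⁻¹ := by have := hy'.1; positivity
      have h2 : (0:ℝ) ≤ (if X * (2:ℝ) ^ (-(m:ℤ) - 1) ≤ y then (1:ℝ) else 0) := by
        split <;> norm_num
      have h3 := hA0 m y hy'
      positivity
    refine step1.trans ?_
    rw [hJkdef]
    apply intervalIntegral.integral_mono_interval hτ''.1 hτ''.2 le_rfl
    · filter_upwards [MeasureTheory.ae_restrict_mem measurableSet_Ioc] with y hy
      exact hg0 k y ⟨(hτ0.trans hy.1).le, hy.2⟩
    · exact hgInt k τ hτ0 hτ1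
  -- step 1: apply the main hypothesis
  have h0 := hmain k hxk τ ⟨hτ0, hτ1⟩
  -- step 2: bound the u-integrand by the A-integrand plus Jk term
  have hφψ : (∫ τ' in τ..1, ∑ l ∈ Finset.Ico x k,
      (2:ℝ) ^ (6 * l) * (τ' ^ 3)⁻¹ *
        (if X * (2:ℝ) ^ (-(l:ℤ) - 1) ≤ τ' then 1 else 0) * u l τ')
      ≤ ∫ τ' in τ..1, ∑ l ∈ Finset.Ico x k,
      (2:ℝ) ^ (6 * l) * (τ' ^ 3)⁻¹ *
        (if X * (2:ℝ) ^ (-(l:ℤ) - 1) ≤ τ' then 1 else 0) *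
          (A l τ' + (2:ℝ) ^ (-(7 * (l:ℤ))) * Jk) := by
    apply intervalIntegral.integral_mono_on hτ1
    · have := IntervalIntegrable.sum (μ := volume) (a := τ) (b := 1) (Finset.Ico x k)
        (f := fun l => fun τ' => (2:ℝ) ^ (6 * l) * (τ' ^ 3)⁻¹ *
          (if X * (2:ℝ) ^ (-(l:ℤ) - 1) ≤ τ' then 1 else 0) * u l τ')
        (fun l _ => gr_term_integrable hτ0 hτ1 (u l) (huc l) _)
      simpa [Finset.sum_fn] using this
    · have := IntervalIntegrable.sum (μ := volume) (a := τ) (b := 1) (Finset.Ico x k)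
        (f := fun l => fun τ' => (2:ℝ) ^ (6 * l) * (τ' ^ 3)⁻¹ *
          (if X * (2:ℝ) ^ (-(l:ℤ) - 1) ≤ τ' then 1 else 0) *
            (A l τ' + (2:ℝ) ^ (-(7 * (l:ℤ))) * Jk))
        (fun l _ => gr_term_integrable hτ0 hτ1
          (fun τ' => A l τ' + (2:ℝ) ^ (-(7 * (l:ℤ))) * Jk)
          ((hAc l).add continuousOn_const) _)
      simpa [Finset.sum_fn] using this
    · intro y hy
      have hy' : y ∈ Set.Icc (0:ℝ) 1 := ⟨le_trans hτ0.le hy.1, hy.2⟩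
      apply Finset.sum_le_sum
      intro l hl
      rw [Finset.mem_Ico] at hl
      by_cases hcy : X * (2:ℝ) ^ (-(l:ℤ) - 1) ≤ y
      · simp only [if_pos hcy]
        have hIHl := IH l hl.2 hl.1 y hcy hy.2
        have hJly := hJl l hl.2.le y hy
        have hul : u l y ≤ A l y + (2:ℝ) ^ (-(7 * (l:ℤ))) * Jk := by
          refine hIHl.trans ?_
          have : (0:ℝ) ≤ (2:ℝ) ^ (-(7 * (l:ℤ))) := by positivity
          nlinarith [hJly]
        have hfac : (0:ℝ) ≤ (2:ℝ) ^ (6 * l) * (y ^ 3)⁻¹ * 1 := by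
          have := hy'.1; positivity
        exact mul_le_mul_of_nonneg_left hul hfac
      · simp only [if_neg hcy, mul_zero, zero_mul, le_refl]
  -- step 3: split and bound
  have hψ1Int : IntervalIntegrable (fun τ' => ∑ l ∈ Finset.Ico x k,
      (2:ℝ) ^ (6 * l) * (τ' ^ 3)⁻¹ *
        (if X * (2:ℝ) ^ (-(l:ℤ) - 1) ≤ τ' then 1 else 0) * A l τ') volume τ 1 := by
    have := IntervalIntegrable.sum (μ := volume) (a := τ) (b := 1) (Finset.Ico x k)
      (f := fun l => fun τ' => (2:ℝ) ^ (6 * l) * (τ' ^ 3)⁻¹ *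
        (if X * (2:ℝ) ^ (-(l:ℤ) - 1) ≤ τ' then 1 else 0) * A l τ')
      (fun l _ => gr_term_integrable hτ0 hτ1 (A l) (hAc l) _)
    simpa [Finset.sum_fn] using this
  have hψ2Int : IntervalIntegrable (fun τ' => ∑ l ∈ Finset.Ico x k,
      (2:ℝ) ^ (6 * l) * (τ' ^ 3)⁻¹ *
        (if X * (2:ℝ) ^ (-(l:ℤ) - 1) ≤ τ' then 1 else 0) *
          ((2:ℝ) ^ (-(7 * (l:ℤ))) * Jk)) volume τ 1 := by
    have := IntervalIntegrable.sum (μ := volume) (a := τ) (b := 1) (Finset.Ico x k)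
      (f := fun l => fun τ' => (2:ℝ) ^ (6 * l) * (τ' ^ 3)⁻¹ *
        (if X * (2:ℝ) ^ (-(l:ℤ) - 1) ≤ τ' then 1 else 0) *
          ((2:ℝ) ^ (-(7 * (l:ℤ))) * Jk))
      (fun l _ => gr_term_integrable hτ0 hτ1
        (fun _ => (2:ℝ) ^ (-(7 * (l:ℤ))) * Jk) continuousOn_const _)
    simpa [Finset.sum_fn] using this
  have hsplit : (∫ τ' in τ..1, ∑ l ∈ Finset.Ico x k,
      (2:ℝ) ^ (6 * l) * (τ' ^ 3)⁻¹ *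
        (if X * (2:ℝ) ^ (-(l:ℤ) - 1) ≤ τ' then 1 else 0) *
          (A l τ' + (2:ℝ) ^ (-(7 * (l:ℤ))) * Jk))
      = (∫ τ' in τ..1, ∑ l ∈ Finset.Ico x k,
      (2:ℝ) ^ (6 * l) * (τ' ^ 3)⁻¹ *
        (if X * (2:ℝ) ^ (-(l:ℤ) - 1) ≤ τ' then 1 else 0) * A l τ')
      + (∫ τ' in τ..1, ∑ l ∈ Finset.Ico x k,
      (2:ℝ) ^ (6 * l) * (τ' ^ 3)⁻¹ *
        (if X * (2:ℝ) ^ (-(l:ℤ) - 1) ≤ τ' then 1 else 0) *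
          ((2:ℝ) ^ (-(7 * (l:ℤ))) * Jk)) := by
    have hfun : (fun τ' : ℝ => ∑ l ∈ Finset.Ico x k,
        (2:ℝ) ^ (6 * l) * (τ' ^ 3)⁻¹ *
          (if X * (2:ℝ) ^ (-(l:ℤ) - 1) ≤ τ' then 1 else 0) *
            (A l τ' + (2:ℝ) ^ (-(7 * (l:ℤ))) * Jk))
        = fun τ' => (∑ l ∈ Finset.Ico x k,
        (2:ℝ) ^ (6 * l) * (τ' ^ 3)⁻¹ *
          (if X * (2:ℝ) ^ (-(l:ℤ) - 1) ≤ τ' then 1 else 0) * A l τ')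
        + ∑ l ∈ Finset.Ico x k,
        (2:ℝ) ^ (6 * l) * (τ' ^ 3)⁻¹ *
          (if X * (2:ℝ) ^ (-(l:ℤ) - 1) ≤ τ' then 1 else 0) *
            ((2:ℝ) ^ (-(7 * (l:ℤ))) * Jk) := by
      funext y
      rw [← Finset.sum_add_distrib]
      exact Finset.sum_congr rfl fun l _ => by ring
    rw [hfun, intervalIntegral.integral_add hψ1Int hψ2Int]
  have hψ1le : (∫ τ' in τ..1, ∑ l ∈ Finset.Ico x k,
      (2:ℝ) ^ (6 * l) * (τ' ^ 3)⁻¹ *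
        (if X * (2:ℝ) ^ (-(l:ℤ) - 1) ≤ τ' then 1 else 0) * A l τ')
      ≤ (2:ℝ) ^ k * Jk := by
    have hmono : (∫ τ' in τ..1, ∑ l ∈ Finset.Ico x k,
        (2:ℝ) ^ (6 * l) * (τ' ^ 3)⁻¹ *
          (if X * (2:ℝ) ^ (-(l:ℤ) - 1) ≤ τ' then 1 else 0) * A l τ')
        ≤ ∫ τ' in τ..1, (2:ℝ) ^ k * ∑ l ∈ Finset.Ico x k,
        (2:ℝ) ^ (5 * l) * (τ' ^ 3)⁻¹ *
          (if X * (2:ℝ) ^ (-(l:ℤ) - 1) ≤ τ' then 1 else 0) * A l τ' := by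
      apply intervalIntegral.integral_mono_on hτ1 hψ1Int
        ((hgInt k τ hτ0 hτ1).const_mul _)
      intro y hy
      have hy' : y ∈ Set.Icc (0:ℝ) 1 := ⟨le_trans hτ0.le hy.1, hy.2⟩
      rw [Finset.mul_sum]
      apply Finset.sum_le_sum
      intro l hl
      rw [Finset.mem_Ico] at hl
      have h6 : (2:ℝ) ^ (6 * l) ≤ (2:ℝ) ^ k * (2:ℝ) ^ (5 * l) := by
        rw [show 6 * l = l + 5 * l by ring, pow_add]
        exact mul_le_mul_of_nonneg_right
          (pow_le_pow_right₀ one_le_two hl.2.le) (by positivity)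
      have h1 : (0:ℝ) ≤ (y ^ 3)⁻¹ := by have := hy'.1; positivity
      have h2 : (0:ℝ) ≤ (if X * (2:ℝ) ^ (-(l:ℤ) - 1) ≤ y then (1:ℝ) else 0) := by
        split <;> norm_num
      have h3 := hA0 l y hy'
      calc (2:ℝ) ^ (6 * l) * (y ^ 3)⁻¹ *
          (if X * (2:ℝ) ^ (-(l:ℤ) - 1) ≤ y then (1:ℝ) else 0) * A l y
          = (2:ℝ) ^ (6 * l) * ((y ^ 3)⁻¹ *
            (if X * (2:ℝ) ^ (-(l:ℤ) - 1) ≤ y then (1:ℝ) else 0) * A l y) := by ring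
        _ ≤ ((2:ℝ) ^ k * (2:ℝ) ^ (5 * l)) * ((y ^ 3)⁻¹ *
            (if X * (2:ℝ) ^ (-(l:ℤ) - 1) ≤ y then (1:ℝ) else 0) * A l y) :=
            mul_le_mul_of_nonneg_right h6 (mul_nonneg (mul_nonneg h1 h2) h3)
        _ = (2:ℝ) ^ k * ((2:ℝ) ^ (5 * l) * (y ^ 3)⁻¹ *
            (if X * (2:ℝ) ^ (-(l:ℤ) - 1) ≤ y then (1:ℝ) else 0) * A l y) := by ring
    rw [intervalIntegral.integral_const_mul] at hmono
    rw [hJkdef]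
    exact hmono
  have hψ2le : (∫ τ' in τ..1, ∑ l ∈ Finset.Ico x k,
      (2:ℝ) ^ (6 * l) * (τ' ^ 3)⁻¹ *
        (if X * (2:ℝ) ^ (-(l:ℤ) - 1) ≤ τ' then 1 else 0) *
          ((2:ℝ) ^ (-(7 * (l:ℤ))) * Jk))
      ≤ (2:ℝ) ^ k * Jk := by
    have hψ2eq : (∫ τ' in τ..1, ∑ l ∈ Finset.Ico x k,
        (2:ℝ) ^ (6 * l) * (τ' ^ 3)⁻¹ *
          (if X * (2:ℝ) ^ (-(l:ℤ) - 1) ≤ τ' then 1 else 0) *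
            ((2:ℝ) ^ (-(7 * (l:ℤ))) * Jk))
        = ∑ l ∈ Finset.Ico x k, ∫ τ' in τ..1,
          (2:ℝ) ^ (6 * l) * (τ' ^ 3)⁻¹ *
            (if X * (2:ℝ) ^ (-(l:ℤ) - 1) ≤ τ' then 1 else 0) *
              ((2:ℝ) ^ (-(7 * (l:ℤ))) * Jk) :=
      intervalIntegral.integral_finset_sum
        (fun l _ => gr_term_integrable hτ0 hτ1
          (fun _ => (2:ℝ) ^ (-(7 * (l:ℤ))) * Jk) continuousOn_const _)
    rw [hψ2eq]
    have hterml : ∀ l ∈ Finset.Ico x k, (∫ τ' in τ..1,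
        (2:ℝ) ^ (6 * l) * (τ' ^ 3)⁻¹ *
          (if X * (2:ℝ) ^ (-(l:ℤ) - 1) ≤ τ' then 1 else 0) *
            ((2:ℝ) ^ (-(7 * (l:ℤ))) * Jk)) ≤ (2:ℝ) ^ l * Jk := by
      intro l _
      have hpull : (∫ τ' in τ..1,
          (2:ℝ) ^ (6 * l) * (τ' ^ 3)⁻¹ *
            (if X * (2:ℝ) ^ (-(l:ℤ) - 1) ≤ τ' then 1 else 0) *
              ((2:ℝ) ^ (-(7 * (l:ℤ))) * Jk))
          = ((2:ℝ) ^ (6 * l) * ((2:ℝ) ^ (-(7 * (l:ℤ))) * Jk)) *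
            ∫ τ' in τ..1, (τ' ^ 3)⁻¹ *
              (if X * (2:ℝ) ^ (-(l:ℤ) - 1) ≤ τ' then 1 else 0) := by
        have hfun2 : (fun τ' : ℝ => (2:ℝ) ^ (6 * l) * (τ' ^ 3)⁻¹ *
            (if X * (2:ℝ) ^ (-(l:ℤ) - 1) ≤ τ' then 1 else 0) *
              ((2:ℝ) ^ (-(7 * (l:ℤ))) * Jk))
            = fun τ' => ((2:ℝ) ^ (6 * l) * ((2:ℝ) ^ (-(7 * (l:ℤ))) * Jk)) *
              ((τ' ^ 3)⁻¹ * (if X * (2:ℝ) ^ (-(l:ℤ) - 1) ≤ τ' then 1 else 0)) := by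
          funext y
          ring
        rw [hfun2, intervalIntegral.integral_const_mul]
      rw [hpull]
      have hconst0 : (0:ℝ) ≤ (2:ℝ) ^ (6 * l) * ((2:ℝ) ^ (-(7 * (l:ℤ))) * Jk) :=
        mul_nonneg (by positivity) (mul_nonneg (by positivity) hJk0)
      have hb := gr_ind_integral_le (hclpos l) hτ0 hτ1
      have hzz : (2:ℝ) ^ (6 * l) * (2:ℝ) ^ (-(7 * (l:ℤ))) *
          ((2:ℝ) ^ l * (2:ℝ) ^ l) = (2:ℝ) ^ l := by
        rw [← zpow_natCast (2:ℝ) (6 * l), ← zpow_natCast (2:ℝ) l,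
          ← zpow_add₀ (two_ne_zero : (2:ℝ) ≠ 0),
          ← zpow_add₀ (two_ne_zero : (2:ℝ) ≠ 0),
          ← zpow_add₀ (two_ne_zero : (2:ℝ) ≠ 0)]
        congr 1
        push_cast
        ring
      calc ((2:ℝ) ^ (6 * l) * ((2:ℝ) ^ (-(7 * (l:ℤ))) * Jk)) *
            ∫ τ' in τ..1, (τ' ^ 3)⁻¹ *
              (if X * (2:ℝ) ^ (-(l:ℤ) - 1) ≤ τ' then 1 else 0)
          ≤ ((2:ℝ) ^ (6 * l) * ((2:ℝ) ^ (-(7 * (l:ℤ))) * Jk)) *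
            ((X * (2:ℝ) ^ (-(l:ℤ) - 1))⁻¹ * (X * (2:ℝ) ^ (-(l:ℤ) - 1))⁻¹) :=
            mul_le_mul_of_nonneg_left hb hconst0
        _ ≤ ((2:ℝ) ^ (6 * l) * ((2:ℝ) ^ (-(7 * (l:ℤ))) * Jk)) *
            ((2:ℝ) ^ l * (2:ℝ) ^ l) :=
            mul_le_mul_of_nonneg_left
              (mul_le_mul (hclinv l) (hclinv l)
                (inv_nonneg.2 (hclpos l).le) (by positivity)) hconst0
        _ = ((2:ℝ) ^ (6 * l) * (2:ℝ) ^ (-(7 * (l:ℤ))) *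
            ((2:ℝ) ^ l * (2:ℝ) ^ l)) * Jk := by ring
        _ = (2:ℝ) ^ l * Jk := by rw [hzz]
    calc (∑ l ∈ Finset.Ico x k, ∫ τ' in τ..1,
        (2:ℝ) ^ (6 * l) * (τ' ^ 3)⁻¹ *
          (if X * (2:ℝ) ^ (-(l:ℤ) - 1) ≤ τ' then 1 else 0) *
            ((2:ℝ) ^ (-(7 * (l:ℤ))) * Jk))
        ≤ ∑ l ∈ Finset.Ico x k, (2:ℝ) ^ l * Jk := Finset.sum_le_sum hterml
      _ = (∑ l ∈ Finset.Ico x k, (2:ℝ) ^ l) * Jk := by rw [Finset.sum_mul]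
      _ ≤ (2:ℝ) ^ k * Jk := by
          apply mul_le_mul_of_nonneg_right _ hJk0
          calc (∑ l ∈ Finset.Ico x k, (2:ℝ) ^ l)
              ≤ ∑ l ∈ Finset.range k, (2:ℝ) ^ l := by
                apply Finset.sum_le_sum_of_subset_of_nonneg
                · rw [Finset.range_eq_Ico]
                  exact Finset.Ico_subset_Ico (Nat.zero_le x) le_rfl
                · intro i _ _
                  positivity
            _ = (2:ℝ) ^ k - 1 := by
                rw [geom_sum_eq (by norm_num : (2:ℝ) ≠ 1) k]
                norm_num
            _ ≤ (2:ℝ) ^ k := by linarith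
  have hbound : (∫ τ' in τ..1, ∑ l ∈ Finset.Ico x k,
      (2:ℝ) ^ (6 * l) * (τ' ^ 3)⁻¹ *
        (if X * (2:ℝ) ^ (-(l:ℤ) - 1) ≤ τ' then 1 else 0) * u l τ')
      ≤ (2:ℝ) ^ k * Jk + (2:ℝ) ^ k * Jk := by
    refine hφψ.trans ?_
    rw [hsplit]
    exact add_le_add hψ1le hψ2le
  have hkey : (2:ℝ) ^ (-(8 * (k:ℤ))) * (2:ℝ) ^ k = (2:ℝ) ^ (-(7 * (k:ℤ))) := by
    rw [← zpow_natCast (2:ℝ) k, ← zpow_add₀ (two_ne_zero : (2:ℝ) ≠ 0)]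
    congr 1
    push_cast
    ring
  have hfinal : (1 / 10) * (2:ℝ) ^ (-(8 * (k:ℤ))) *
      (∫ τ' in τ..1, ∑ l ∈ Finset.Ico x k,
      (2:ℝ) ^ (6 * l) * (τ' ^ 3)⁻¹ *
        (if X * (2:ℝ) ^ (-(l:ℤ) - 1) ≤ τ' then 1 else 0) * u l τ')
      ≤ (2:ℝ) ^ (-(7 * (k:ℤ))) * Jk := by
    calc (1 / 10) * (2:ℝ) ^ (-(8 * (k:ℤ))) *
        (∫ τ' in τ..1, ∑ l ∈ Finset.Ico x k,
        (2:ℝ) ^ (6 * l) * (τ' ^ 3)⁻¹ *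
          (if X * (2:ℝ) ^ (-(l:ℤ) - 1) ≤ τ' then 1 else 0) * u l τ')
        ≤ (1 / 10) * (2:ℝ) ^ (-(8 * (k:ℤ))) * ((2:ℝ) ^ k * Jk + (2:ℝ) ^ k * Jk) :=
          mul_le_mul_of_nonneg_left hbound (by positivity)
      _ = (1 / 5) * ((2:ℝ) ^ (-(8 * (k:ℤ))) * (2:ℝ) ^ k) * Jk := by ring
      _ = (1 / 5) * (2:ℝ) ^ (-(7 * (k:ℤ))) * Jk := by rw [hkey]
      _ ≤ (2:ℝ) ^ (-(7 * (k:ℤ))) * Jk := by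
          nlinarith [hJk0, (by positivity : (0:ℝ) < (2:ℝ) ^ (-(7 * (k:ℤ))))]
  linarith [h0, hfinal]


/-- Gronwall-type corollary with `b(k) = (1/10)·2^{-8k}` and
`c(l,τ') = 2^{6l}·(τ')^{-3}·𝟙{τ' ≥ X·2^{-l-1}}`: there is an absolute constant `C > 0`
such that the stated integral inequality for `u` in terms of `A` implies
`u(k,τ) ≤ C·(A(k,τ) + 2^{-7k}·∫_τ^1 Σ_{l=x}^{k-1} 2^{5l}·(τ')^{-3}·𝟙{τ' ≥ X·2^{-l-1}}·A(l,τ') dτ')`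
for all `k ≥ x` and `X·2^{-k-1} ≤ τ ≤ 1`. -/
theorem gronwall_high_frequency :
    ∃ C : ℝ, 0 < C ∧
      ∀ (x : ℕ) (X : ℝ), 2 ≤ X →
      ∀ u A : ℕ → ℝ → ℝ,
        (∀ k, ∀ τ ∈ Set.Icc (0:ℝ) 1, 0 ≤ u k τ) →
        (∀ k, ∀ τ ∈ Set.Icc (0:ℝ) 1, 0 ≤ A k τ) →
        (∀ k, ContinuousOn (u k) (Set.Icc (0:ℝ) 1)) →
        (∀ k, ContinuousOn (A k) (Set.Icc (0:ℝ) 1)) →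
        (∀ k, x ≤ k → ∀ τ ∈ Set.Ioc (0:ℝ) 1,
          u k τ ≤ A k τ + (1 / 10) * (2:ℝ) ^ (-(8 * (k:ℤ))) *
            ∫ τ' in τ..1, ∑ l ∈ Finset.Ico x k,
              (2:ℝ) ^ (6 * l) * (τ' ^ 3)⁻¹ *
                (if X * (2:ℝ) ^ (-(l:ℤ) - 1) ≤ τ' then 1 else 0) * u l τ') →
        ∀ k, x ≤ k → ∀ τ : ℝ, X * (2:ℝ) ^ (-(k:ℤ) - 1) ≤ τ → τ ≤ 1 →
          u k τ ≤ C * (A k τ + (2:ℝ) ^ (-(7 * (k:ℤ))) *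
            ∫ τ' in τ..1, ∑ l ∈ Finset.Ico x k,
              (2:ℝ) ^ (5 * l) * (τ' ^ 3)⁻¹ *
                (if X * (2:ℝ) ^ (-(l:ℤ) - 1) ≤ τ' then 1 else 0) * A l τ') := by
  refine ⟨1, one_pos, ?_⟩
  intro x X hX u A _ hA0 huc hAc hmain k hxk τ hcτ hτ1
  rw [one_mul]
  exact gr_key x X hX u A hA0 huc hAc hmain k hxk τ hcτ hτ1
end

section
/- There is an absolute constant C > 0 such that for all integers l, k with 0 ≤ l < k and all real τ with 0 < τ ≤ 1, one has ∏_{j=l+1}^{k-1} min( 2 , 1 + 2^{-2j}·τ^{-2} ) ≤ C·( 1 + 2^{-l}·τ^{-1} ). -/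
open Finset Real

/-- Elementary product bound: there is an absolute constant `C > 0` such that for all
`0 ≤ l < k` and all `0 < τ ≤ 1`,
`∏_{j=l+1}^{k-1} min(2, 1 + 2^{-2j}·τ^{-2}) ≤ C·(1 + 2^{-l}·τ^{-1})`. -/
theorem product_bound :
    ∃ C : ℝ, 0 < C ∧
      ∀ l k : ℕ, l < k → ∀ τ : ℝ, 0 < τ → τ ≤ 1 →
        ∏ j ∈ Finset.Ico (l + 1) k, min 2 (1 + (2:ℝ) ^ (-(2 * (j:ℤ))) * (τ ^ 2)⁻¹)
          ≤ C * (1 + (2:ℝ) ^ (-(l:ℤ)) * τ⁻¹) := by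
  classical
  refine ⟨8, by norm_num, ?_⟩
  intro l k hlk τ hτ hτ1
  have hτinv : (0:ℝ) < τ⁻¹ := by positivity
  have hbase : (0:ℝ) < 1 + (2:ℝ) ^ (-(l:ℤ)) * τ⁻¹ := by positivity
  -- existence of n with 2^{-n} ≤ τ
  have hex : ∃ n : ℕ, (2:ℝ) ^ (-(n:ℤ)) ≤ τ := by
    obtain ⟨n, hn⟩ := exists_pow_lt_of_lt_one hτ (by norm_num : (1/2:ℝ) < 1)
    refine ⟨n, le_of_lt ?_⟩
    have : (2:ℝ) ^ (-(n:ℤ)) = (1/2:ℝ) ^ n := by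
      rw [zpow_neg, zpow_natCast, one_div, inv_pow]
    rw [this]; exact hn
  set m := Nat.find hex with hmdef
  have hm : (2:ℝ) ^ (-(m:ℤ)) ≤ τ := Nat.find_spec hex
  set M := max (l + 1) m with hMdef
  have hlM : l + 1 ≤ M := le_max_left _ _
  have hmM : m ≤ M := le_max_right _ _
  -- Lemma A : 2^{(M:ℤ) - l - 1} ≤ 1 + 2^{-l} τ⁻¹
  have hA : (2:ℝ) ^ ((M:ℤ) - l - 1) ≤ 1 + (2:ℝ) ^ (-(l:ℤ)) * τ⁻¹ := by
    rcases le_or_gt m (l + 1) with hc | hc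
    · have : M = l + 1 := max_eq_left hc
      rw [this]
      have : ((l + 1 : ℕ) : ℤ) - l - 1 = 0 := by push_cast; ring
      rw [this, zpow_zero]
      nlinarith [mul_pos (zpow_pos (by norm_num : (0:ℝ) < 2) (-(l:ℤ))) hτinv]
    · have hMm : M = m := max_eq_right hc.le
      have hm1 : 1 ≤ m := by omega
      -- minimality: τ < 2^{-(m-1)}
      have hmin : ¬ ((2:ℝ) ^ (-((m - 1 : ℕ) : ℤ)) ≤ τ) := Nat.find_min hex (by omega)
      push_neg at hmin
      have hcast : ((m - 1 : ℕ) : ℤ) = (m : ℤ) - 1 := by omega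
      rw [hcast] at hmin
      have hinv : (2:ℝ) ^ ((m:ℤ) - 1) ≤ τ⁻¹ := by
        have h2e : (0:ℝ) < (2:ℝ) ^ ((m:ℤ) - 1) := by positivity
        rw [zpow_neg] at hmin
        have hmin2 : τ * (2:ℝ) ^ ((m:ℤ) - 1) < 1 := by
          calc τ * (2:ℝ) ^ ((m:ℤ) - 1) < ((2:ℝ) ^ ((m:ℤ) - 1))⁻¹ * (2:ℝ) ^ ((m:ℤ) - 1) :=
              mul_lt_mul_of_pos_right hmin h2e
            _ = 1 := inv_mul_cancel₀ h2e.ne'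
        have hid : (2:ℝ) ^ ((m:ℤ) - 1) = τ⁻¹ * (τ * (2:ℝ) ^ ((m:ℤ) - 1)) := by
          field_simp
        rw [hid]
        nlinarith
      have : (2:ℝ) ^ ((M:ℤ) - l - 1) = (2:ℝ) ^ (-(l:ℤ)) * (2:ℝ) ^ ((m:ℤ) - 1) := by
        rw [hMm, ← zpow_add₀ (by norm_num : (2:ℝ) ≠ 0)]; ring_nf
      rw [this]
      have h2l : (0:ℝ) < (2:ℝ) ^ (-(l:ℤ)) := zpow_pos (by norm_num) _
      nlinarith [mul_le_mul_of_nonneg_left hinv h2l.le]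
  -- head bound: 2^(M - (l+1)) as ℕ-pow equals zpow
  have hhead : ((2:ℝ)) ^ (M - (l + 1)) = (2:ℝ) ^ ((M:ℤ) - l - 1) := by
    rw [← zpow_natCast]
    congr 1
    omega
  -- each min-factor is at most 2 and at most 1 + term, and ≥ 0
  have hterm_nonneg : ∀ j : ℕ, (0:ℝ) ≤ 1 + (2:ℝ) ^ (-(2 * (j:ℤ))) * (τ ^ 2)⁻¹ := by
    intro j; positivity
  have hmin_nonneg : ∀ j : ℕ, (0:ℝ) ≤ min 2 (1 + (2:ℝ) ^ (-(2 * (j:ℤ))) * (τ ^ 2)⁻¹) := by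
    intro j; exact le_min (by norm_num) (hterm_nonneg j)
  -- tail bound
  have htail : ∀ k' : ℕ, ∏ j ∈ Finset.Ico M k', (1 + (2:ℝ) ^ (-(2 * (j:ℤ))) * (τ ^ 2)⁻¹) ≤ 8 := by
    intro k'
    have hstep : ∀ j ∈ Finset.Ico M k',
        (1 + (2:ℝ) ^ (-(2 * (j:ℤ))) * (τ ^ 2)⁻¹) ≤ Real.exp ((1/4:ℝ) ^ (j - M)) := by
      intro j hj
      have hjM : M ≤ j := (Finset.mem_Ico.mp hj).1
      have hterm : (2:ℝ) ^ (-(2 * (j:ℤ))) * (τ ^ 2)⁻¹ ≤ (1/4:ℝ) ^ (j - M) := by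
        have hτ2 : (τ ^ 2)⁻¹ ≤ (2:ℝ) ^ (2 * (M:ℤ)) := by
          have h1 : (2:ℝ) ^ (-(M:ℤ)) ≤ τ := le_trans (by
            apply zpow_le_zpow_right₀ (by norm_num : (1:ℝ) ≤ 2); omega) hm
          have h1' : ((2:ℝ) ^ (-(M:ℤ))) ^ 2 ≤ τ ^ 2 := by
            apply pow_le_pow_left₀ (by positivity) h1
          have h2 : (τ ^ 2)⁻¹ ≤ (((2:ℝ) ^ (-(M:ℤ))) ^ 2)⁻¹ :=
            (inv_le_inv₀ (by positivity) (by positivity)).mpr h1'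
          calc (τ ^ 2)⁻¹ ≤ (((2:ℝ) ^ (-(M:ℤ))) ^ 2)⁻¹ := h2
            _ = (2:ℝ) ^ (2 * (M:ℤ)) := by
                rw [← zpow_natCast (((2:ℝ)) ^ (-(M:ℤ))) 2, ← zpow_mul, ← zpow_neg]
                congr 1; push_cast; ring
        calc (2:ℝ) ^ (-(2 * (j:ℤ))) * (τ ^ 2)⁻¹
            ≤ (2:ℝ) ^ (-(2 * (j:ℤ))) * (2:ℝ) ^ (2 * (M:ℤ)) := by
              apply mul_le_mul_of_nonneg_left hτ2 (by positivity)
          _ = (2:ℝ) ^ (2 * (M:ℤ) - 2 * (j:ℤ)) := by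
              rw [← zpow_add₀ (by norm_num : (2:ℝ) ≠ 0)]; ring_nf
          _ = (1/4:ℝ) ^ (j - M) := by
              rw [one_div, ← zpow_natCast ((4:ℝ)⁻¹) (j - M), inv_zpow']
              have : (4:ℝ) = (2:ℝ) ^ (2:ℤ) := by norm_num
              rw [this, ← zpow_mul]
              congr 1
              omega
      calc (1 + (2:ℝ) ^ (-(2 * (j:ℤ))) * (τ ^ 2)⁻¹) ≤ 1 + (1/4:ℝ) ^ (j - M) := by linarith
        _ ≤ Real.exp ((1/4:ℝ) ^ (j - M)) := by
            have := Real.add_one_le_exp ((1/4:ℝ) ^ (j - M)); linarith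
    calc ∏ j ∈ Finset.Ico M k', (1 + (2:ℝ) ^ (-(2 * (j:ℤ))) * (τ ^ 2)⁻¹)
        ≤ ∏ j ∈ Finset.Ico M k', Real.exp ((1/4:ℝ) ^ (j - M)) :=
          Finset.prod_le_prod (fun j _ => hterm_nonneg j) hstep
      _ = Real.exp (∑ j ∈ Finset.Ico M k', (1/4:ℝ) ^ (j - M)) := (Real.exp_sum _ _).symm
      _ ≤ 8 := by
          have hsum : ∑ j ∈ Finset.Ico M k', (1/4:ℝ) ^ (j - M) ≤ 2 := by
            rw [Finset.sum_Ico_eq_sum_range]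
            have : ∀ i ∈ Finset.range (k' - M), (1/4:ℝ) ^ (M + i - M) = (1/4:ℝ) ^ i := by
              intro i _; congr 1; omega
            rw [Finset.sum_congr rfl this]
            have := geom_sum_eq (by norm_num : (1/4:ℝ) ≠ 1) (k' - M)
            rw [this]
            have h4 : (0:ℝ) ≤ (1/4:ℝ) ^ (k' - M) := by positivity
            rw [div_le_iff_of_neg (by norm_num : (1/4:ℝ) - 1 < 0)]
            nlinarith
          calc Real.exp (∑ j ∈ Finset.Ico M k', (1/4:ℝ) ^ (j - M)) ≤ Real.exp 2 :=
              Real.exp_le_exp.mpr hsum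
            _ ≤ 8 := by
                have h1 : Real.exp 2 = Real.exp 1 * Real.exp 1 := by
                  rw [← Real.exp_add]; norm_num
                have := Real.exp_one_lt_d9
                nlinarith [Real.exp_pos 1]
  -- main split
  rcases le_or_gt k M with hkM | hMk
  · -- all factors ≤ 2; product ≤ 2^(k-(l+1)) ≤ 2^(M-(l+1))
    calc ∏ j ∈ Finset.Ico (l + 1) k, min 2 (1 + (2:ℝ) ^ (-(2 * (j:ℤ))) * (τ ^ 2)⁻¹)
        ≤ ∏ j ∈ Finset.Ico (l + 1) k, (2:ℝ) :=
          Finset.prod_le_prod (fun j _ => hmin_nonneg j) (fun j _ => min_le_left _ _)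
      _ = (2:ℝ) ^ (k - (l + 1)) := by rw [Finset.prod_const, Nat.card_Ico]
      _ ≤ (2:ℝ) ^ (M - (l + 1)) := by
          apply pow_le_pow_right₀ (by norm_num : (1:ℝ) ≤ 2); omega
      _ = (2:ℝ) ^ ((M:ℤ) - l - 1) := hhead
      _ ≤ 1 + (2:ℝ) ^ (-(l:ℤ)) * τ⁻¹ := hA
      _ ≤ 8 * (1 + (2:ℝ) ^ (-(l:ℤ)) * τ⁻¹) := by nlinarith
  · -- split at M
    rw [← Finset.prod_Ico_consecutive _ hlM hMk.le]
    have hP1 : ∏ j ∈ Finset.Ico (l + 1) M, min 2 (1 + (2:ℝ) ^ (-(2 * (j:ℤ))) * (τ ^ 2)⁻¹)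
        ≤ 1 + (2:ℝ) ^ (-(l:ℤ)) * τ⁻¹ := by
      calc ∏ j ∈ Finset.Ico (l + 1) M, min 2 (1 + (2:ℝ) ^ (-(2 * (j:ℤ))) * (τ ^ 2)⁻¹)
          ≤ ∏ j ∈ Finset.Ico (l + 1) M, (2:ℝ) :=
            Finset.prod_le_prod (fun j _ => hmin_nonneg j) (fun j _ => min_le_left _ _)
        _ = (2:ℝ) ^ (M - (l + 1)) := by rw [Finset.prod_const, Nat.card_Ico]
        _ = (2:ℝ) ^ ((M:ℤ) - l - 1) := hhead
        _ ≤ 1 + (2:ℝ) ^ (-(l:ℤ)) * τ⁻¹ := hA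
    have hP2 : ∏ j ∈ Finset.Ico M k, min 2 (1 + (2:ℝ) ^ (-(2 * (j:ℤ))) * (τ ^ 2)⁻¹) ≤ 8 := by
      calc ∏ j ∈ Finset.Ico M k, min 2 (1 + (2:ℝ) ^ (-(2 * (j:ℤ))) * (τ ^ 2)⁻¹)
          ≤ ∏ j ∈ Finset.Ico M k, (1 + (2:ℝ) ^ (-(2 * (j:ℤ))) * (τ ^ 2)⁻¹) :=
            Finset.prod_le_prod (fun j _ => hmin_nonneg j) (fun j _ => min_le_right _ _)
        _ ≤ 8 := htail k
    have hP1nn : (0:ℝ) ≤ ∏ j ∈ Finset.Ico (l + 1) M, min 2 (1 + (2:ℝ) ^ (-(2 * (j:ℤ))) * (τ ^ 2)⁻¹) :=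
      Finset.prod_nonneg (fun j _ => hmin_nonneg j)
    have hP2nn : (0:ℝ) ≤ ∏ j ∈ Finset.Ico M k, min 2 (1 + (2:ℝ) ^ (-(2 * (j:ℤ))) * (τ ^ 2)⁻¹) :=
      Finset.prod_nonneg (fun j _ => hmin_nonneg j)
    calc (∏ j ∈ Finset.Ico (l + 1) M, min 2 (1 + (2:ℝ) ^ (-(2 * (j:ℤ))) * (τ ^ 2)⁻¹)) *
          ∏ j ∈ Finset.Ico M k, min 2 (1 + (2:ℝ) ^ (-(2 * (j:ℤ))) * (τ ^ 2)⁻¹)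
        ≤ (1 + (2:ℝ) ^ (-(l:ℤ)) * τ⁻¹) * 8 :=
          mul_le_mul hP1 hP2 hP2nn hbase.le
      _ = 8 * (1 + (2:ℝ) ^ (-(l:ℤ)) * τ⁻¹) := by ring
end

section
/- There is an absolute constant C ≥ 1 with the following property. Let x be a natural number and let a, b : ℕ → [0,∞) be sequences such that for every integer k ≥ x one has a(k) ≤ b(k) + (1/10)·2^{-5k}·Σ_{m=x}^{k-1} 2^{5m}·a(m). Then for every integer k ≥ x one has a(k) ≤ C·( b(k) + 2^{-4k}·Σ_{m=x}^{k-1} 2^{4m}·b(m) ). -/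
/-!
With `A m = 2^{5m} a m` and `B m = 2^{5m} b m` the hypothesis becomes the classical discrete
Gronwall inequality `A k ≤ B k + (1/10) Σ_{x ≤ m < k} A m`, whose solution is bounded by
`Σ_{x ≤ m < k} A m ≤ Σ_{x ≤ m < k} (11/10)^{k-1-m} B m`. Since `(11/10)^{k-1-m} ≤ 2^{k-m}`,
the growth factor trades the weight `2^{5m}` for `2^k · 2^{4m}`, which gives the claim with `C = 1`.
-/

namespace HighFreq

open Finset

theorem sum_Ico_le_sum_Ico_pow_mul_of_le_add_mul_sum {A B : ℕ → ℝ} {c : ℝ} {x : ℕ}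
    (hc : 0 ≤ c) (h : ∀ k, x ≤ k → A k ≤ B k + c * ∑ m ∈ Ico x k, A m) :
    ∀ k, x ≤ k → ∑ m ∈ Ico x k, A m ≤ ∑ m ∈ Ico x k, (1 + c) ^ (k - 1 - m) * B m := by
  intro k hk
  induction k, hk using Nat.le_induction with
  | base => simp
  | succ k hk ih =>
    have hpow : ∀ m ∈ Ico x k, (1 + c) * ((1 + c) ^ (k - 1 - m) * B m) =
        (1 + c) ^ (k + 1 - 1 - m) * B m := by
      intro m hm
      rw [← mul_assoc, ← pow_succ', Nat.add_sub_cancel, Nat.sub_right_comm,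
        Nat.sub_add_cancel (Nat.sub_pos_of_lt (mem_Ico.1 hm).2)]
    calc ∑ m ∈ Ico x (k + 1), A m = ∑ m ∈ Ico x k, A m + A k := sum_Ico_succ_top hk A
      _ ≤ (1 + c) * ∑ m ∈ Ico x k, A m + B k := by linarith [h k hk]
      _ ≤ (1 + c) * ∑ m ∈ Ico x k, (1 + c) ^ (k - 1 - m) * B m + B k := by gcongr
      _ = ∑ m ∈ Ico x (k + 1), (1 + c) ^ (k + 1 - 1 - m) * B m := by
        rw [sum_Ico_succ_top hk, mul_sum, sum_congr rfl hpow]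
        simp

theorem two_pow_mul_two_zpow_neg (n : ℕ) : (2:ℝ) ^ n * (2:ℝ) ^ (-(n:ℤ)) = 1 := by
  rw [zpow_neg, zpow_natCast, mul_inv_cancel₀ (by positivity)]

theorem gronwall_kernel_le {k m : ℕ} (hm : m < k) :
    1 / 10 * (2:ℝ) ^ (-(5 * (k:ℤ))) * ((1 + 1 / 10) ^ (k - 1 - m) * 2 ^ (5 * m)) ≤
      (2:ℝ) ^ (-(4 * (k:ℤ))) * 2 ^ (4 * m) := by
  have hgeom : (1 + 1 / 10 : ℝ) ^ (k - 1 - m) ≤ 2 ^ (k - m) :=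
    calc (1 + 1 / 10 : ℝ) ^ (k - 1 - m) ≤ 2 ^ (k - 1 - m) := by gcongr; norm_num
      _ ≤ 2 ^ (k - m) := pow_le_pow_right₀ one_le_two (by omega)
  calc 1 / 10 * (2:ℝ) ^ (-(5 * (k:ℤ))) * ((1 + 1 / 10) ^ (k - 1 - m) * 2 ^ (5 * m))
      ≤ 1 * (2:ℝ) ^ (-(5 * (k:ℤ))) * (2 ^ (k - m) * 2 ^ (5 * m)) := by gcongr; norm_num
    _ = (2:ℝ) ^ (-(4 * (k:ℤ))) * 2 ^ (4 * m) := by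
      simp only [one_mul, ← zpow_natCast, ← zpow_add₀ (two_ne_zero' ℝ)]
      congr 1
      push_cast [hm.le]
      ring

/-- Discrete Gronwall inequality: there is an absolute constant `C ≥ 1` such that if the
nonnegative sequences `a, b` satisfy
`a(k) ≤ b(k) + (1/10)·2^{-5k}·Σ_{m=x}^{k-1} 2^{5m}·a(m)` for all `k ≥ x`, then
`a(k) ≤ C·(b(k) + 2^{-4k}·Σ_{m=x}^{k-1} 2^{4m}·b(m))` for all `k ≥ x`. -/
theorem discrete_gronwall :
    ∃ C : ℝ, 1 ≤ C ∧
      ∀ (x : ℕ) (a b : ℕ → ℝ),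
        (∀ k, 0 ≤ a k) → (∀ k, 0 ≤ b k) →
        (∀ k, x ≤ k →
          a k ≤ b k + (1 / 10) * (2:ℝ) ^ (-(5 * (k:ℤ))) *
            ∑ m ∈ Finset.Ico x k, (2:ℝ) ^ (5 * m) * a m) →
        ∀ k, x ≤ k →
          a k ≤ C * (b k + (2:ℝ) ^ (-(4 * (k:ℤ))) *
            ∑ m ∈ Finset.Ico x k, (2:ℝ) ^ (4 * m) * b m) := by
  refine ⟨1, le_rfl, fun x a b _ hb h k hk => ?_⟩
  have hscaled : ∀ k, x ≤ k → (2:ℝ) ^ (5 * k) * a k ≤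
      (2:ℝ) ^ (5 * k) * b k + 1 / 10 * ∑ m ∈ Ico x k, (2:ℝ) ^ (5 * m) * a m := by
    intro k hk
    have hmul := mul_le_mul_of_nonneg_left (h k hk) (pow_nonneg zero_le_two (5 * k))
    have hcancel := two_pow_mul_two_zpow_neg (5 * k)
    push_cast at hcancel
    linear_combination hmul + 1 / 10 * (∑ m ∈ Ico x k, (2:ℝ) ^ (5 * m) * a m) * hcancel
  have hsum := sum_Ico_le_sum_Ico_pow_mul_of_le_add_mul_sum (by norm_num) hscaled k hk
  calc a k ≤ b k + 1 / 10 * (2:ℝ) ^ (-(5 * (k:ℤ))) *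
        ∑ m ∈ Ico x k, (2:ℝ) ^ (5 * m) * a m := h k hk
    _ ≤ b k + 1 / 10 * (2:ℝ) ^ (-(5 * (k:ℤ))) *
        ∑ m ∈ Ico x k, (1 + 1 / 10) ^ (k - 1 - m) * ((2:ℝ) ^ (5 * m) * b m) := by gcongr
    _ ≤ b k + (2:ℝ) ^ (-(4 * (k:ℤ))) * ∑ m ∈ Ico x k, (2:ℝ) ^ (4 * m) * b m := by
      rw [add_le_add_iff_left, mul_sum, mul_sum]
      refine sum_le_sum fun m hm => ?_
      have hterm := mul_le_mul_of_nonneg_right (gronwall_kernel_le (mem_Ico.1 hm).2) (hb m)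
      linarith
    _ = 1 * _ := (one_mul _).symm
end HighFreq
end

section
/- Let Ω = {(u,v) ∈ ℝ² : u < 0 and v > 0}, and define s, T : Ω → ℝ by s(u,v) = -2·√(-u·v) and T(u,v) = log( 2·√(-v/u) ). Then s and T are infinitely differentiable on Ω, and for every point p = (u,v) ∈ Ω the following two identities hold: (i) for all tangent vectors (a,b), (a',b') ∈ ℝ², (Ds_p(a,b))·(Ds_p(a',b')) − s(p)²·(DT_p(a,b))·(DT_p(a',b')) = −2·(a·b' + a'·b), where Ds_p and DT_p denote the (Fréchet) derivatives of s and T at p; (ii) s(p)²·e^{−2·T(p)} = u². -/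
private lemma ambient_alg (u v a b a' b' : ℝ) (hu : u ≠ 0) (hv : v ≠ 0) :
    (u * b + v * a) * (u * b' + v * a') / -(u * v) -
      -4 * (u * v) * (1 / 2 * (v⁻¹ * b - u⁻¹ * a) * (1 / 2 * (v⁻¹ * b' - u⁻¹ * a'))) =
      -2 * (a * b' + a' * b) := by
  field_simp
  ring


/-- On `Ω = {u < 0, v > 0}`, with `s(u,v) = -2√(-uv)` and `T(u,v) = log(2√(-v/u))`, the
functions `s` and `T` are smooth, and (i) `ds⊗ds - s²·dT⊗dT = -2(du⊗dv + dv⊗du)` as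
bilinear forms, (ii) `s²·e^{-2T} = u²`: the ambient cone metric takes the double-null
form `-2(du⊗dv + dv⊗du) + u²·ĝ`. -/
theorem ambient_double_null_form
    (Ω : Set (ℝ × ℝ)) (hΩ : Ω = {p : ℝ × ℝ | p.1 < 0 ∧ 0 < p.2})
    (s T : ℝ × ℝ → ℝ)
    (hs : ∀ p : ℝ × ℝ, s p = -2 * Real.sqrt (-(p.1 * p.2)))
    (hT : ∀ p : ℝ × ℝ, T p = Real.log (2 * Real.sqrt (-(p.2 / p.1)))) :
    ContDiffOn ℝ (⊤ : ℕ∞) s Ω ∧ ContDiffOn ℝ (⊤ : ℕ∞) T Ω ∧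
      ∀ p ∈ Ω,
        (∀ a b a' b' : ℝ,
          fderiv ℝ s p (a, b) * fderiv ℝ s p (a', b') -
              (s p) ^ 2 * (fderiv ℝ T p (a, b) * fderiv ℝ T p (a', b'))
            = -2 * (a * b' + a' * b)) ∧
        (s p) ^ 2 * Real.exp (-2 * T p) = p.1 ^ 2 := by
  have hsfun : s = fun q : ℝ × ℝ => -2 * Real.sqrt (-(q.1 * q.2)) := funext hs
  have hTfun : T = fun q : ℝ × ℝ => Real.log (2 * Real.sqrt (-(q.2 / q.1))) := funext hT
  subst hsfun hTfun hΩ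
  refine ⟨?_, ?_, ?_⟩
  · -- smoothness of s
    intro p hp
    obtain ⟨hu, hv⟩ := hp
    have hx : (0:ℝ) < -(p.1 * p.2) := by nlinarith
    refine ContDiffAt.contDiffWithinAt ?_
    exact contDiffAt_const.mul ((Real.contDiffAt_sqrt hx.ne').comp p
      ((contDiffAt_fst.mul contDiffAt_snd).neg))
  · -- smoothness of T
    intro p hp
    obtain ⟨hu, hv⟩ := hp
    have hy : (0:ℝ) < -(p.2 / p.1) := by
      have := div_neg_of_pos_of_neg hv hu
      linarith
    have hz : (0:ℝ) < 2 * Real.sqrt (-(p.2 / p.1)) := by positivity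
    refine ContDiffAt.contDiffWithinAt ?_
    exact (Real.contDiffAt_log.2 hz.ne').comp p
      (contDiffAt_const.mul ((Real.contDiffAt_sqrt hy.ne').comp p
        ((contDiffAt_snd.div contDiffAt_fst hu.ne).neg)))
  · intro p hp
    obtain ⟨hu, hv⟩ := hp
    have hx : (0:ℝ) < -(p.1 * p.2) := by nlinarith
    set r : ℝ := Real.sqrt (-(p.1 * p.2)) with hr_def
    have hr : 0 < r := Real.sqrt_pos.2 hx
    have hr2 : r ^ 2 = -(p.1 * p.2) := Real.sq_sqrt hx.le
    have hy : (0:ℝ) < -(p.2 / p.1) := by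
      have := div_neg_of_pos_of_neg hv hu
      linarith
    have hy2 : Real.sqrt (-(p.2 / p.1)) ^ 2 = -(p.2 / p.1) := Real.sq_sqrt hy.le
    -- derivative of s
    have hmul : HasFDerivAt (fun q : ℝ × ℝ => q.1 * q.2)
        (p.1 • ContinuousLinearMap.snd ℝ ℝ ℝ + p.2 • ContinuousLinearMap.fst ℝ ℝ ℝ) p :=
      hasFDerivAt_fst.mul hasFDerivAt_snd
    have hneg := hmul.neg
    have hsqrt : HasFDerivAt (fun q : ℝ × ℝ => Real.sqrt (-(q.1 * q.2)))
        ((1 / (2 * r)) • (-(p.1 • ContinuousLinearMap.snd ℝ ℝ ℝ +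
          p.2 • ContinuousLinearMap.fst ℝ ℝ ℝ))) p :=
      (Real.hasDerivAt_sqrt hx.ne').comp_hasFDerivAt p hneg
    have hS : HasFDerivAt (fun q : ℝ × ℝ => -2 * Real.sqrt (-(q.1 * q.2)))
        ((-2 : ℝ) • ((1 / (2 * r)) • (-(p.1 • ContinuousLinearMap.snd ℝ ℝ ℝ +
          p.2 • ContinuousLinearMap.fst ℝ ℝ ℝ)))) p :=
      hsqrt.const_mul (-2)
    -- derivative of T via local formula
    have hU : {q : ℝ × ℝ | q.1 < 0 ∧ 0 < q.2} ∈ nhds p := by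
      refine IsOpen.mem_nhds ?_ ⟨hu, hv⟩
      exact (isOpen_lt continuous_fst continuous_const).inter
        (isOpen_lt continuous_const continuous_snd)
    have heq : (fun q : ℝ × ℝ => Real.log (2 * Real.sqrt (-(q.2 / q.1)))) =ᶠ[nhds p]
        fun q : ℝ × ℝ => Real.log 2 + (1/2) * (Real.log q.2 - Real.log q.1) := by
      filter_upwards [hU] with q hq
      obtain ⟨hq1, hq2⟩ := hq
      have hyq : (0:ℝ) < -(q.2 / q.1) := by
        have := div_neg_of_pos_of_neg hq2 hq1
        linarith
      rw [Real.log_mul two_ne_zero (Real.sqrt_pos.2 hyq).ne', Real.log_sqrt hyq.le,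
        Real.log_neg_eq_log, Real.log_div hq2.ne' hq1.ne]
      ring
    have hlog2 : HasFDerivAt (fun q : ℝ × ℝ => Real.log q.2)
        (p.2⁻¹ • ContinuousLinearMap.snd ℝ ℝ ℝ) p :=
      (Real.hasDerivAt_log hv.ne').comp_hasFDerivAt p hasFDerivAt_snd
    have hlog1 : HasFDerivAt (fun q : ℝ × ℝ => Real.log q.1)
        (p.1⁻¹ • ContinuousLinearMap.fst ℝ ℝ ℝ) p :=
      (Real.hasDerivAt_log hu.ne).comp_hasFDerivAt p hasFDerivAt_fst
    have hTg : HasFDerivAt (fun q : ℝ × ℝ => Real.log 2 + (1/2) * (Real.log q.2 - Real.log q.1))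
        ((1/2 : ℝ) • (p.2⁻¹ • ContinuousLinearMap.snd ℝ ℝ ℝ -
          p.1⁻¹ • ContinuousLinearMap.fst ℝ ℝ ℝ)) p :=
      ((hlog2.sub hlog1).const_mul (1/2)).const_add (Real.log 2)
    have hT' : HasFDerivAt (fun q : ℝ × ℝ => Real.log (2 * Real.sqrt (-(q.2 / q.1))))
        ((1/2 : ℝ) • (p.2⁻¹ • ContinuousLinearMap.snd ℝ ℝ ℝ -
          p.1⁻¹ • ContinuousLinearMap.fst ℝ ℝ ℝ)) p :=
      hTg.congr_of_eventuallyEq heq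
    have hs2 : (-2 * r) ^ 2 = -4 * (p.1 * p.2) := by
      rw [mul_pow, hr2]; ring
    constructor
    · intro a b a' b'
      rw [hS.fderiv, hT'.fderiv]
      simp only [ContinuousLinearMap.smul_apply, ContinuousLinearMap.neg_apply,
        ContinuousLinearMap.add_apply, ContinuousLinearMap.sub_apply,
        ContinuousLinearMap.coe_fst', ContinuousLinearMap.coe_snd', smul_eq_mul]
      have e1 : ∀ x y : ℝ,
          (-2 * (1 / (2 * r) * -(p.1 * y + p.2 * x))) = (p.1 * y + p.2 * x) / r := by
        intro x y
        field_simp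
      rw [e1, e1]
      rw [div_mul_div_comm, ← sq, hr2]
      have hsp : (-2 * r) ^ 2 = -4 * (p.1 * p.2) := hs2
      rw [hsp]
      exact ambient_alg p.1 p.2 a b a' b' hu.ne hv.ne'
    · have hexp : Real.exp (-2 * Real.log (2 * Real.sqrt (-(p.2 / p.1)))) =
          ((2 * Real.sqrt (-(p.2 / p.1))) ^ 2)⁻¹ := by
        have hz : (0:ℝ) < 2 * Real.sqrt (-(p.2 / p.1)) := by positivity
        rw [show (-2 : ℝ) * Real.log (2 * Real.sqrt (-(p.2 / p.1))) =
            Real.log (((2 * Real.sqrt (-(p.2 / p.1))) ^ 2)⁻¹) by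
          rw [Real.log_inv, Real.log_pow]; push_cast; ring]
        exact Real.exp_log (by positivity)
      rw [hexp, hs2]
      rw [mul_pow, hy2]
      field_simp
      ring
end

section
/- There is an absolute constant C > 0 with the following property. Let x be a natural number, let X ≥ 2 be a real number, and for each integer l ≥ x let e(l,·) : [0,1] → [0,∞) be continuous. For l ≥ x and τ ∈ (0,1], set E(l,τ) = 𝟙{τ ≥ X·2^{-l-1}}·∫_τ^1 e(l,σ) dσ. Then for every integer k ≥ x and every τ ∈ (0,1]: 2^{-7k}·∫_τ^1 ( Σ_{l=x}^{k-1} 2^{5l}·(τ')^{-3}·E(l,τ') ) dτ' ≤ C·2^{-2k}·τ^{-2}·Σ_{l=x}^{k-1} ∫_τ^1 e(l,σ) dσ. -/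
open MeasureTheory

/-- Conversion of the iterated dyadic-weighted integrals of the truncated tail energies
`E(l,τ) = 𝟙{τ ≥ X·2^{-l-1}}·∫_τ^1 e(l,σ) dσ` into a single weighted sum: there is an
absolute constant `C > 0` such that for all `k ≥ x` and `τ ∈ (0,1]`,
`2^{-7k}·∫_τ^1 Σ_{l=x}^{k-1} 2^{5l}·(τ')^{-3}·E(l,τ') dτ'
  ≤ C·2^{-2k}·τ^{-2}·Σ_{l=x}^{k-1} ∫_τ^1 e(l,σ) dσ`. -/
theorem cumulative_error_bound :
    ∃ C : ℝ, 0 < C ∧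
      ∀ (x : ℕ) (X : ℝ), 2 ≤ X →
      ∀ e : ℕ → ℝ → ℝ,
        (∀ l, ∀ τ ∈ Set.Icc (0:ℝ) 1, 0 ≤ e l τ) →
        (∀ l, ContinuousOn (e l) (Set.Icc (0:ℝ) 1)) →
        ∀ E : ℕ → ℝ → ℝ,
          (∀ l : ℕ, ∀ τ : ℝ,
            E l τ = (if X * (2:ℝ) ^ (-(l:ℤ) - 1) ≤ τ then 1 else 0) *
              ∫ σ in τ..1, e l σ) →
          ∀ k, x ≤ k → ∀ τ ∈ Set.Ioc (0:ℝ) 1,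
            (2:ℝ) ^ (-(7 * (k:ℤ))) *
                ∫ τ' in τ..1, ∑ l ∈ Finset.Ico x k,
                  (2:ℝ) ^ (5 * l) * (τ' ^ 3)⁻¹ * E l τ'
              ≤ C * (2:ℝ) ^ (-(2 * (k:ℤ))) * (τ ^ 2)⁻¹ *
                  ∑ l ∈ Finset.Ico x k, ∫ σ in τ..1, e l σ := by
  refine ⟨1, one_pos, ?_⟩
  intro x X hX e he hec E hE k hk τ hτ
  obtain ⟨hτ0, hτ1⟩ := hτ
  -- integrability of e l on subintervals of [0,1]
  have heint : ∀ l, ∀ a b : ℝ, a ∈ Set.Icc (0:ℝ) 1 → b ∈ Set.Icc (0:ℝ) 1 →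
      IntervalIntegrable (e l) volume a b := by
    intro l a b ha hb
    exact ((hec l).mono (Set.uIcc_subset_Icc ha hb)).intervalIntegrable
  set I : ℕ → ℝ := fun l => ∫ σ in τ..1, e l σ with hIdef
  have hτIcc : τ ∈ Set.Icc (0:ℝ) 1 := ⟨hτ0.le, hτ1⟩
  have hInn : ∀ l, 0 ≤ I l := by
    intro l
    apply intervalIntegral.integral_nonneg hτ1
    intro u hu
    exact he l u ⟨le_trans hτ0.le hu.1, hu.2⟩
  have hEle : ∀ l, ∀ τ' ∈ Set.Icc τ 1, E l τ' ≤ I l := by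
    intro l τ' hτ'
    have hτ'Icc : τ' ∈ Set.Icc (0:ℝ) 1 := ⟨le_trans hτ0.le hτ'.1, hτ'.2⟩
    rw [hE]
    split
    · rw [one_mul]
      have hsplit : I l = (∫ σ in τ..τ', e l σ) + ∫ σ in τ'..1, e l σ :=
        (intervalIntegral.integral_add_adjacent_intervals
          (heint l τ τ' hτIcc hτ'Icc)
          (heint l τ' 1 hτ'Icc (by norm_num))).symm
      have h1 : 0 ≤ ∫ σ in τ..τ', e l σ := by
        apply intervalIntegral.integral_nonneg hτ'.1
        intro u hu
        exact he l u ⟨le_trans hτ0.le hu.1, le_trans hu.2 hτ'.2⟩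
      linarith
    · rw [zero_mul]; exact hInn l
  have hEnn : ∀ l, ∀ τ' ∈ Set.Icc τ 1, 0 ≤ E l τ' := by
    intro l τ' hτ'
    rw [hE]
    split
    · rw [one_mul]
      apply intervalIntegral.integral_nonneg hτ'.2
      intro u hu
      exact he l u ⟨le_trans hτ0.le (le_trans hτ'.1 hu.1), hu.2⟩
    · rw [zero_mul]
  set A : ℝ := ∑ l ∈ Finset.Ico x k, (2:ℝ) ^ (5 * l) * I l with hAdef
  have hAnn : 0 ≤ A := Finset.sum_nonneg fun l _ => mul_nonneg (by positivity) (hInn l)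
  set f : ℝ → ℝ := fun τ' => ∑ l ∈ Finset.Ico x k,
      (2:ℝ) ^ (5 * l) * (τ' ^ 3)⁻¹ * E l τ' with hfdef
  -- the comparison function
  set g : ℝ → ℝ := fun τ' => A * (τ' ^ 3)⁻¹ with hgdef
  have hfg : ∀ τ' ∈ Set.Icc τ 1, f τ' ≤ g τ' := by
    intro τ' hτ'
    have hτ'0 : 0 < τ' := lt_of_lt_of_le hτ0 hτ'.1
    have hinv : (0:ℝ) ≤ (τ' ^ 3)⁻¹ := by positivity
    calc f τ' ≤ ∑ l ∈ Finset.Ico x k, (2:ℝ) ^ (5 * l) * (τ' ^ 3)⁻¹ * I l := by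
          apply Finset.sum_le_sum
          intro l _
          exact mul_le_mul_of_nonneg_left (hEle l τ' hτ')
            (mul_nonneg (by positivity) hinv)
      _ = g τ' := by
          show _ = A * (τ' ^ 3)⁻¹
          rw [hAdef, Finset.sum_mul]
          apply Finset.sum_congr rfl
          intro l _
          ring
  have hginteg : IntervalIntegrable g volume τ 1 := by
    apply ContinuousOn.intervalIntegrable
    apply ContinuousOn.mul continuousOn_const
    apply ContinuousOn.inv₀ (by fun_prop)
    intro u hu
    have h1 : τ ≤ u := (Set.uIcc_of_le hτ1 ▸ hu).1
    have h2 : 0 < u := lt_of_lt_of_le hτ0 h1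
    positivity
  -- value of ∫ g
  have hzint : ∫ τ' in τ..1, (τ' ^ 3)⁻¹ = ((τ:ℝ) ^ (2:ℕ))⁻¹ / 2 - 1 / 2 := by
    have h0 : (0:ℝ) ∉ Set.uIcc τ 1 := by
      rw [Set.uIcc_of_le hτ1]
      intro h
      exact absurd h.1 (not_le.mpr hτ0)
    have := integral_zpow (a := τ) (b := 1) (n := -3) (Or.inr ⟨by norm_num, h0⟩)
    have heq : ∀ u ∈ Set.uIcc τ (1:ℝ), (u ^ 3)⁻¹ = u ^ (-3:ℤ) := by
      intro u hu
      rw [zpow_neg]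
      norm_cast
    rw [intervalIntegral.integral_congr heq, this]
    have hτne : τ ≠ 0 := ne_of_gt hτ0
    rw [show (-3:ℤ) + 1 = -2 by norm_num]
    rw [zpow_neg, zpow_neg]
    norm_num
    rw [← zpow_natCast τ 2]
    ring
  have hgval : ∫ τ' in τ..1, g τ' = A * (((τ:ℝ) ^ (2:ℕ))⁻¹ / 2 - 1 / 2) := by
    rw [hgdef]
    rw [intervalIntegral.integral_const_mul, hzint]
  have hintf : ∫ τ' in τ..1, f τ' ≤ A * ((τ ^ (2:ℕ))⁻¹ / 2) := by
    by_cases hf : IntervalIntegrable f volume τ 1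
    · have h1 : ∫ τ' in τ..1, f τ' ≤ ∫ τ' in τ..1, g τ' :=
        intervalIntegral.integral_mono_on hτ1 hf hginteg hfg
      rw [hgval] at h1
      have h2 : A * (((τ:ℝ) ^ (2:ℕ))⁻¹ / 2 - 1 / 2) ≤ A * ((τ ^ (2:ℕ))⁻¹ / 2) := by
        apply mul_le_mul_of_nonneg_left _ hAnn
        linarith
      linarith
    · rw [intervalIntegral.integral_undef hf]
      positivity
  -- now the arithmetic
  have hAle : A ≤ (2:ℝ) ^ (5 * k) * ∑ l ∈ Finset.Ico x k, I l := by
    rw [Finset.mul_sum]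
    apply Finset.sum_le_sum
    intro l hl
    apply mul_le_mul_of_nonneg_right _ (hInn l)
    apply pow_le_pow_right₀ (by norm_num)
    exact Nat.mul_le_mul_left 5 (le_of_lt (Finset.mem_Ico.mp hl).2)
  have hSnn : 0 ≤ ∑ l ∈ Finset.Ico x k, I l := Finset.sum_nonneg fun l _ => hInn l
  have hτ2 : (0:ℝ) < (τ ^ (2:ℕ))⁻¹ := by positivity
  have key : (2:ℝ) ^ (-(7 * (k:ℤ))) * (2:ℝ) ^ (5 * k) ≤ (2:ℝ) ^ (-(2 * (k:ℤ))) := by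
    rw [← zpow_natCast (2:ℝ) (5 * k), ← zpow_add₀ (by norm_num : (2:ℝ) ≠ 0)]
    apply zpow_le_zpow_right₀ (by norm_num : (1:ℝ) ≤ 2)
    push_cast
    linarith
  have h7 : (0:ℝ) < (2:ℝ) ^ (-(7 * (k:ℤ))) := by positivity
  calc (2:ℝ) ^ (-(7 * (k:ℤ))) * ∫ τ' in τ..1, f τ'
      ≤ (2:ℝ) ^ (-(7 * (k:ℤ))) * (A * ((τ ^ (2:ℕ))⁻¹ / 2)) :=
        mul_le_mul_of_nonneg_left hintf h7.le
    _ ≤ (2:ℝ) ^ (-(7 * (k:ℤ))) * ((2:ℝ) ^ (5 * k) * (∑ l ∈ Finset.Ico x k, I l)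
          * ((τ ^ (2:ℕ))⁻¹ / 2)) := by
        apply mul_le_mul_of_nonneg_left _ h7.le
        apply mul_le_mul_of_nonneg_right hAle (by positivity)
    _ ≤ 1 * (2:ℝ) ^ (-(2 * (k:ℤ))) * (τ ^ 2)⁻¹ * ∑ l ∈ Finset.Ico x k, I l := by
        rw [one_mul]
        have := mul_le_mul_of_nonneg_right key
          (mul_nonneg hSnn (by positivity : (0:ℝ) ≤ (τ ^ (2:ℕ))⁻¹ / 2))
        calc (2:ℝ) ^ (-(7 * (k:ℤ))) * ((2:ℝ) ^ (5 * k) * (∑ l ∈ Finset.Ico x k, I l)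
              * ((τ ^ (2:ℕ))⁻¹ / 2))
            = ((2:ℝ) ^ (-(7 * (k:ℤ))) * (2:ℝ) ^ (5 * k)) *
                ((∑ l ∈ Finset.Ico x k, I l) * ((τ ^ (2:ℕ))⁻¹ / 2)) := by ring
          _ ≤ (2:ℝ) ^ (-(2 * (k:ℤ))) * ((∑ l ∈ Finset.Ico x k, I l) * ((τ ^ (2:ℕ))⁻¹ / 2)) :=
              this
          _ ≤ (2:ℝ) ^ (-(2 * (k:ℤ))) * (τ ^ 2)⁻¹ * ∑ l ∈ Finset.Ico x k, I l := by
              have h2k : (0:ℝ) < (2:ℝ) ^ (-(2 * (k:ℤ))) := by positivity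
              nlinarith [mul_nonneg hSnn hτ2.le]
end
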